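/- arXiv:1405.5971 — 9 statements merged into one kernel-verified Lean document; each statement's English description precedes it below -/
import Mathlib

section
/- Let X be a second countable Hausdorff topological space and let Γ be a second countable, locally compact, Hausdorff topological group that is not compact, acting continuously on X. Then the following are equivalent: (i) (X, Γ) is k-transitive for every k ∈ ℕ; (ii) (X, Γ) is thick strong mixing; (iii) for every finite collection of nonempty open sets U₁, …, Uₙ, V₁, …, Vₙ ⊆ X, the intersection ⋂_{1 ≤ i ≤ n} N(Uᵢ, Vᵢ) is a thick subset of Γ. -/
/-!
Under `k`-transitivity for all `k`, a finite intersection `M = ⋂ᵢ N(Uᵢ, Vᵢ)` contains `g⁻¹γ`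
for all `g` in any prescribed compact set `K`: cover `K` by finitely many translates `tW` of
a small neighbourhood `W` of `1`, shrink each `Vᵢ` to `Vᵢ'` with `Vᵢ' ⊆ wVᵢ` for `w ∈ W`, and
apply transitivity to the finitely many pairs `(Uᵢ, tVᵢ')`. Taking `K` finite gives thickness
of `M`. For thick strong mixing, enumerate the pairs of basic open sets, let `Mₘ` be the
intersection over the first `m` of them, exhaust `Γ` by compact sets `Kₘ`, and let `N` be the
union of the compact sets `Kₘ⁻¹γₘ ⊆ Mₘ`; the `j`-th pair then fails only on the compact
part `⋃_{m ≤ j} Kₘ⁻¹γₘ` of `N`. Conversely, a thick set is never covered by a compact set `C`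
of a non-compact group, since `g ∉ CC⁻¹` and `x, g⁻¹x ∈ N` would give `x ∉ C` or `g⁻¹x ∉ C`.
-/

open Pointwise

/-- A subset `N` of a group `G` is thick if for every finite subset `F ⊆ G`,
`N ∩ ⋂_{γ ∈ F} γN ≠ ∅`. -/
def IsThick {G : Type*} [Group G] (N : Set G) : Prop :=
  ∀ F : Finset G, (N ∩ ⋂ γ ∈ F, γ • N).Nonempty

/-- `N(A, B) = {γ ∈ G : γA ∩ B ≠ ∅}`. -/
def NSet (G : Type*) {X : Type*} [Group G] [MulAction G X] (A B : Set X) : Set G :=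
  {γ : G | ((γ • A) ∩ B).Nonempty}

/-- The system `(X, G)` is `k`-transitive: for all nonempty open sets
`U₁, …, U_k, V₁, …, V_k ⊆ X` there is `γ ∈ G` with `γUᵢ ∩ Vᵢ ≠ ∅` for all `i`. -/
def IsKTrans (G : Type*) (X : Type*) [Group G] [TopologicalSpace X] [MulAction G X]
    (k : ℕ) : Prop :=
  ∀ U V : Fin k → Set X, (∀ i, IsOpen (U i)) → (∀ i, (U i).Nonempty) →
    (∀ i, IsOpen (V i)) → (∀ i, (V i).Nonempty) →
    ∃ γ : G, ∀ i, ((γ • U i) ∩ V i).Nonempty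

/-- The system `(X, G)` is thick strong mixing: there is a thick `N ⊆ G` such that for every
pair of nonempty open `U, V ⊆ X` there is a compact `F ⊆ N` with `γU ∩ V ≠ ∅` for all
`γ ∈ N \ F`. -/
def ThickStrongMixing (G : Type*) (X : Type*) [Group G] [TopologicalSpace G]
    [TopologicalSpace X] [MulAction G X] : Prop :=
  ∃ N : Set G, IsThick N ∧
    ∀ U V : Set X, IsOpen U → U.Nonempty → IsOpen V → V.Nonempty →
      ∃ F : Set G, IsCompact F ∧ F ⊆ N ∧ ∀ γ ∈ N \ F, ((γ • U) ∩ V).Nonempty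

open Topology

def IsCompactlyThick {G : Type*} [Group G] [TopologicalSpace G] (M : Set G) : Prop :=
  ∀ K : Set G, IsCompact K → ∃ γ : G, ∀ g ∈ K, γ ∈ g • M

section ThickSets

variable {G : Type*} [Group G] [TopologicalSpace G]

theorem IsCompactlyThick.isThick {M : Set G} (hM : IsCompactlyThick M) : IsThick M := by
  intro F
  obtain ⟨γ, hγ⟩ := hM (insert 1 F) ((F : Set G).toFinite.isCompact.insert 1)
  refine ⟨γ, by simpa using hγ 1 (Set.mem_insert _ _), Set.mem_iInter₂.mpr fun g hg => ?_⟩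
  exact hγ g (Set.mem_insert_of_mem _ hg)

variable [IsTopologicalGroup G]

theorem IsThick.diff_nonempty_of_isCompact (hnc : ¬ CompactSpace G) {N C : Set G}
    (hN : IsThick N) (hC : IsCompact C) : (N \ C).Nonempty := by
  obtain ⟨g, hg⟩ : ∃ g, g ∉ C * C⁻¹ :=
    Set.ne_univ_iff_exists_notMem _ |>.mp fun h => hnc ⟨h ▸ hC.mul hC.inv⟩
  obtain ⟨x, hxN, hgx⟩ := hN {g}
  have hgxN : g⁻¹ • x ∈ N := Set.mem_smul_set_iff_inv_smul_mem.mp (by simpa using hgx)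
  by_contra hsub
  have hNC : N ⊆ C := fun y hy => by_contra fun hyC => hsub ⟨y, hy, hyC⟩
  exact hg ⟨x, hNC hxN, (g⁻¹ * x)⁻¹, Set.inv_mem_inv.mpr (hNC hgxN), by group⟩

theorem exists_isThick_forall_exists_isCompact_diff_subset [SigmaCompactSpace G]
    {M : ℕ → Set G} (hM : Antitone M) (hthick : ∀ m, IsCompactlyThick (M m)) :
    ∃ N : Set G, IsThick N ∧ ∀ j, ∃ F, IsCompact F ∧ F ⊆ N ∧ N \ F ⊆ M j := by
  set K := compactCovering G
  have hK : ∀ m, IsCompact (insert 1 (K m)) := fun m => (isCompact_compactCovering G m).insert 1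
  choose γ hγ using fun m => hthick m _ (hK m)
  set B : ℕ → Set G := fun m => (fun g => g⁻¹ * γ m) '' insert 1 (K m)
  have hB : ∀ m, IsCompact (B m) := fun m => (hK m).image (by fun_prop)
  have hBM : ∀ m, B m ⊆ M m := by
    rintro m _ ⟨g, hg, rfl⟩
    exact Set.mem_smul_set_iff_inv_smul_mem.mp (hγ m g hg)
  refine ⟨⋃ m, B m, fun F => ?_, fun j => ?_⟩
  · obtain ⟨m, hFK⟩ := (Monotone.directed_le fun _ _ h => compactCovering_subset G h)
      |>.exists_mem_subset_of_finset_subset_biUnion (s := F)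
        (by simp [iUnion_compactCovering])
    refine ⟨γ m, Set.mem_iUnion_of_mem m ⟨1, Set.mem_insert _ _, by simp⟩,
      Set.mem_iInter₂.mpr fun g hg => ?_⟩
    exact Set.mem_smul_set_iff_inv_smul_mem.mpr
      (Set.mem_iUnion_of_mem m ⟨g, Set.mem_insert_of_mem _ (hFK hg), rfl⟩)
  · refine ⟨⋃ m ≤ j, B m, (Set.finite_le_nat j).isCompact_biUnion fun m _ => hB m,
      Set.iUnion₂_subset fun m _ => Set.subset_iUnion B m, ?_⟩
    rintro x ⟨hxN, hxF⟩
    obtain ⟨m, hxm⟩ := Set.mem_iUnion.mp hxN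
    have hjm : j ≤ m := by
      by_contra! hmj
      exact hxF (Set.mem_biUnion hmj.le hxm)
    exact hM hjm (hBM m hxm)

end ThickSets

section Action

variable {Γ X : Type*} [Group Γ] [MulAction Γ X]

theorem nSet_mono {U U' V V' : Set X} (hU : U ⊆ U') (hV : V ⊆ V') :
    NSet Γ U V ⊆ NSet Γ U' V' :=
  fun _ h => h.mono (Set.inter_subset_inter (Set.smul_set_mono hU) hV)

theorem mem_smul_nSet_iff {γ g : Γ} {U V : Set X} :
    γ ∈ g • NSet Γ U V ↔ ((γ • U) ∩ (g • V)).Nonempty := by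
  rw [Set.mem_smul_set_iff_inv_smul_mem, ← Set.smul_set_nonempty (a := g⁻¹),
    Set.smul_set_inter, inv_smul_smul, smul_smul, smul_eq_mul]
  rfl

variable [TopologicalSpace X]

theorem exists_smul_inter_nonempty_of_isKTrans (h : ∀ k, IsKTrans Γ X k) {ι : Type*} [Finite ι]
    (U V : ι → Set X) (hUo : ∀ i, IsOpen (U i)) (hUne : ∀ i, (U i).Nonempty)
    (hVo : ∀ i, IsOpen (V i)) (hVne : ∀ i, (V i).Nonempty) :
    ∃ γ : Γ, ∀ i, ((γ • U i) ∩ V i).Nonempty := by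
  obtain ⟨k, ⟨e⟩⟩ := Finite.exists_equiv_fin ι
  obtain ⟨γ, hγ⟩ := h k (U ∘ e.symm) (V ∘ e.symm)
    (fun _ => hUo _) (fun _ => hUne _) (fun _ => hVo _) (fun _ => hVne _)
  exact ⟨γ, fun i => by simpa using hγ (e i)⟩

theorem isKTrans_of_forall_isThick_iInter_nSet
    (h : ∀ (n : ℕ) (U V : Fin n → Set X), (∀ i, IsOpen (U i)) → (∀ i, (U i).Nonempty) →
      (∀ i, IsOpen (V i)) → (∀ i, (V i).Nonempty) → IsThick (⋂ i, NSet Γ (U i) (V i)))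
    (k : ℕ) : IsKTrans Γ X k := by
  intro U V hUo hUne hVo hVne
  obtain ⟨γ, hγ, -⟩ := h k U V hUo hUne hVo hVne ∅
  exact ⟨γ, Set.mem_iInter.mp hγ⟩

variable [TopologicalSpace Γ]

theorem isKTrans_of_thickStrongMixing [IsTopologicalGroup Γ] (hnc : ¬ CompactSpace Γ)
    (h : ThickStrongMixing Γ X) (k : ℕ) : IsKTrans Γ X k := by
  obtain ⟨N, hN, hmix⟩ := h
  intro U V hUo hUne hVo hVne
  choose F hF _ hNF using fun i => hmix (U i) (V i) (hUo i) (hUne i) (hVo i) (hVne i)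
  obtain ⟨γ, hγN, hγF⟩ := hN.diff_nonempty_of_isCompact hnc (isCompact_iUnion hF)
  exact ⟨γ, fun i => hNF i γ ⟨hγN, fun hγ => hγF (Set.mem_iUnion_of_mem i hγ)⟩⟩

variable [ContinuousSMul Γ X]

theorem exists_mem_nhds_one_subset_smul [ContinuousInv Γ] {V : Set X} (hVo : IsOpen V)
    (hVne : V.Nonempty) :
    ∃ W ∈ 𝓝 (1 : Γ), ∃ V' : Set X, IsOpen V' ∧ V'.Nonempty ∧ ∀ w ∈ W, V' ⊆ w • V := by
  obtain ⟨v, hv⟩ := hVne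
  have hP : IsOpen {p : Γ × X | p.1⁻¹ • p.2 ∈ V} := hVo.preimage (by fun_prop)
  obtain ⟨W, V', hW, hV', h1W, hvV', hsub⟩ := isOpen_prod_iff.mp hP 1 v (by simpa using hv)
  refine ⟨W, hW.mem_nhds h1W, V', hV', ⟨v, hvV'⟩, fun w hw x hx => ?_⟩
  exact Set.mem_smul_set_iff_inv_smul_mem.mpr (hsub (Set.mk_mem_prod hw hx))

theorem isCompactlyThick_iInter_nSet [IsTopologicalGroup Γ] (h : ∀ k, IsKTrans Γ X k)
    {ι : Type*} [Finite ι] (U V : ι → Set X) (hUo : ∀ i, IsOpen (U i))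
    (hUne : ∀ i, (U i).Nonempty) (hVo : ∀ i, IsOpen (V i)) (hVne : ∀ i, (V i).Nonempty) :
    IsCompactlyThick (⋂ i, NSet Γ (U i) (V i)) := by
  intro K hK
  choose W hW V' hV'o hV'ne hWV' using fun i => exists_mem_nhds_one_subset_smul (Γ := Γ)
    (hVo i) (hVne i)
  obtain ⟨t, -, hKt⟩ := hK.elim_nhds_subcover (fun g => g • ⋂ i, W i) fun g _ => by
    simpa using (smul_mem_nhds_smul_iff g).mpr (Filter.iInter_mem.mpr hW)
  obtain ⟨γ, hγ⟩ := exists_smul_inter_nonempty_of_isKTrans h (ι := ι × t)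
    (fun p => U p.1) (fun p => (p.2 : Γ) • V' p.1) (fun p => hUo p.1) (fun p => hUne p.1)
    (fun p => (hV'o p.1).smul _) (fun p => (hV'ne p.1).smul_set)
  refine ⟨γ, fun g hg => ?_⟩
  obtain ⟨s, hs, w, hw, rfl⟩ := Set.mem_iUnion₂.mp (hKt hg)
  rw [Set.smul_set_iInter]
  refine Set.mem_iInter.mpr fun i => mem_smul_nSet_iff.mpr ((hγ (i, ⟨s, hs⟩)).mono ?_)
  refine Set.inter_subset_inter_right _ ?_
  change s • V' i ⊆ (s * w) • V i
  rw [mul_smul]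
  exact Set.smul_set_mono (hWV' i w (Set.mem_iInter.mp hw i))

theorem thickStrongMixing_of_isKTrans [IsTopologicalGroup Γ] [SigmaCompactSpace Γ]
    [SecondCountableTopology X] (h : ∀ k, IsKTrans Γ X k) : ThickStrongMixing Γ X := by
  obtain ⟨b, hbc, hbne, hb⟩ := TopologicalSpace.exists_countable_basis X
  obtain ⟨f, hf⟩ := Set.countable_iff_exists_subset_range.mp (hbc.prod hbc)
  set S : ℕ → Set (Set X × Set X) := fun m => b ×ˢ b ∩ f '' Set.Iio m
  have hS : ∀ m, (S m).Finite := fun m => ((Set.finite_Iio m).image f).inter_of_right _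
  have hM : Antitone fun m => ⋂ p ∈ S m, NSet Γ p.1 p.2 := fun m m' hmm' =>
    Set.biInter_subset_biInter_left
      (Set.inter_subset_inter_right _ (Set.image_mono (Set.Iio_subset_Iio hmm')))
  have hthick : ∀ m, IsCompactlyThick (⋂ p ∈ S m, NSet Γ p.1 p.2) := by
    intro m
    have := (hS m).to_subtype
    have hne : ∀ B ∈ b, Set.Nonempty B := fun B hB =>
      Set.nonempty_iff_ne_empty.mpr (ne_of_mem_of_not_mem hB hbne)
    have hbo : ∀ p ∈ S m, IsOpen p.1 ∧ p.1.Nonempty ∧ IsOpen p.2 ∧ p.2.Nonempty :=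
      fun p ⟨⟨h1, h2⟩, _⟩ => ⟨hb.isOpen h1, hne _ h1, hb.isOpen h2, hne _ h2⟩
    rw [Set.biInter_eq_iInter]
    exact isCompactlyThick_iInter_nSet h (fun p : S m => p.1.1) (fun p => p.1.2)
      (fun p => (hbo p p.2).1) (fun p => (hbo p p.2).2.1) (fun p => (hbo p p.2).2.2.1)
      (fun p => (hbo p p.2).2.2.2)
  obtain ⟨N, hN, htail⟩ := exists_isThick_forall_exists_isCompact_diff_subset hM hthick
  refine ⟨N, hN, fun U V hUo ⟨u, hu⟩ hVo ⟨v, hv⟩ => ?_⟩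
  obtain ⟨W, hWb, -, hWU⟩ := hb.exists_subset_of_mem_open hu hUo
  obtain ⟨W', hW'b, -, hW'V⟩ := hb.exists_subset_of_mem_open hv hVo
  obtain ⟨j, hj⟩ := hf (Set.mk_mem_prod hWb hW'b)
  obtain ⟨F, hF, hFN, hNF⟩ := htail (j + 1)
  refine ⟨F, hF, hFN, fun γ hγ => ?_⟩
  have hjS : (W, W') ∈ S (j + 1) := ⟨⟨hWb, hW'b⟩, j, Nat.lt_succ_self j, hj⟩
  exact nSet_mono hWU hW'V (Set.mem_iInter₂.mp (hNF hγ) _ hjS)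

end Action

theorem main_equivalence_general {X Γ : Type*} [TopologicalSpace X]
    [SecondCountableTopology X]
    [Group Γ] [TopologicalSpace Γ] [IsTopologicalGroup Γ]
    [SecondCountableTopology Γ] [LocallyCompactSpace Γ]
    (hnc : ¬ CompactSpace Γ)
    [MulAction Γ X] [ContinuousSMul Γ X] :
    ((∀ k : ℕ, IsKTrans Γ X k) ↔ ThickStrongMixing Γ X) ∧
    ((∀ k : ℕ, IsKTrans Γ X k) ↔
      ∀ (n : ℕ) (U V : Fin n → Set X), (∀ i, IsOpen (U i)) → (∀ i, (U i).Nonempty) →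
        (∀ i, IsOpen (V i)) → (∀ i, (V i).Nonempty) →
        IsThick (⋂ i, NSet Γ (U i) (V i))) :=
  ⟨⟨thickStrongMixing_of_isKTrans, isKTrans_of_thickStrongMixing hnc⟩,
    ⟨fun h _ U V hUo hUne hVo hVne =>
      (isCompactlyThick_iInter_nSet h U V hUo hUne hVo hVne).isThick,
      isKTrans_of_forall_isThick_iInter_nSet⟩⟩

/-- Main theorem: for `X` a second countable Hausdorff space and `Γ` a second countable,
locally compact, Hausdorff topological group that is not compact, acting continuously on `X`,
the following are equivalent: (i) `(X, Γ)` is `k`-transitive for every `k`;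
(ii) `(X, Γ)` is thick strong mixing; (iii) every finite intersection
`⋂ᵢ N(Uᵢ, Vᵢ)` over nonempty open sets is thick. -/
theorem main_equivalence {X Γ : Type*} [TopologicalSpace X] [T2Space X]
    [SecondCountableTopology X]
    [Group Γ] [TopologicalSpace Γ] [IsTopologicalGroup Γ] [T2Space Γ]
    [SecondCountableTopology Γ] [LocallyCompactSpace Γ]
    (hnc : ¬ CompactSpace Γ)
    [MulAction Γ X] [ContinuousSMul Γ X] :
    ((∀ k : ℕ, IsKTrans Γ X k) ↔ ThickStrongMixing Γ X) ∧
    ((∀ k : ℕ, IsKTrans Γ X k) ↔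
      ∀ (n : ℕ) (U V : Fin n → Set X), (∀ i, IsOpen (U i)) → (∀ i, (U i).Nonempty) →
        (∀ i, IsOpen (V i)) → (∀ i, (V i).Nonempty) →
        IsThick (⋂ i, NSet Γ (U i) (V i))) :=
  main_equivalence_general hnc
end

section
/- The Chacón system (X, ℤ) is weak mixing: for any four nonempty open sets U₁, U₂, V₁, V₂ ⊆ X there exists n ∈ ℤ such that Sⁿ U₁ ∩ V₁ ≠ ∅ and Sⁿ U₂ ∩ V₂ ≠ ∅. -/
/-- The Chacón blocks: `Bblock n` is the block `B_{n+1}` of the paper, i.e.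
`Bblock 0 = B₁ = 0010` and `B_{n+1} = B_n B_n 1 B_n`. -/
def Bblock : ℕ → List Bool
  | 0 => [false, false, true, false]
  | n + 1 => Bblock n ++ Bblock n ++ [true] ++ Bblock n

/-- `shiftZ n = Sⁿ` where `S` is the left shift `(Sx)_i = x_{i+1}`. -/
def shiftZ (n : ℤ) (x : ℤ → Bool) : ℤ → Bool := fun i => x (i + n)

/-- `ω` spells the Chacón point: for every block `B_n` (of length `l_n`), the coordinates
`ω_{-l_n} ⋯ ω_{l_n - 1}` spell the word `B_n B_n`. -/
def SpellsChacon (ω : ℤ → Bool) : Prop :=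
  ∀ n : ℕ, ∀ i : ℕ, i < 2 * (Bblock n).length →
    ω ((i : ℤ) - ((Bblock n).length : ℤ)) = (Bblock n ++ Bblock n).getD i false

/-- The Chacón subshift: the closure of the two-sided shift orbit of `ω` in `{0,1}^ℤ`
with the product topology. -/
def chaconX (ω : ℤ → Bool) : Set (ℤ → Bool) :=
  closure (Set.range fun n : ℤ => shiftZ n ω)

namespace ChaconAux

/-- length of the `n`-th block -/
def L (n : ℕ) : ℕ := (Bblock n).length

lemma L_succ (n : ℕ) : L (n + 1) = 3 * L n + 1 := by
  simp [L, Bblock, List.length_append]; ring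

lemma L_ge (n : ℕ) : n + 4 ≤ L n := by
  induction n with
  | zero => simp [L, Bblock]
  | succ n ih => rw [L_succ]; omega

/-- `w` occurs in `ω` at position `p`. -/
def Occ (ω : ℤ → Bool) (w : List Bool) (p : ℤ) : Prop :=
  ∀ t : ℕ, t < w.length → ω (p + t) = w.getD t false

lemma occ_congr {ω : ℤ → Bool} {w : List Bool} {p q : ℤ} (h : Occ ω w p) (e : p = q) :
    Occ ω w q := e ▸ h

lemma occ_append_left {ω : ℤ → Bool} {u v : List Bool} {p : ℤ} (h : Occ ω (u ++ v) p) :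
    Occ ω u p := by
  intro t ht
  have h2 := h t (by rw [List.length_append]; omega)
  rwa [List.getD_append _ _ _ _ ht] at h2

lemma occ_append_right {ω : ℤ → Bool} {u v : List Bool} {p : ℤ} (h : Occ ω (u ++ v) p) :
    Occ ω v (p + u.length) := by
  intro t ht
  have h2 := h (u.length + t) (by rw [List.length_append]; omega)
  rw [List.getD_append_right _ _ _ _ (by omega)] at h2
  have e : p + (↑(u.length + t) : ℤ) = p + u.length + t := by push_cast; ring
  rw [e] at h2
  simpa using h2

lemma occ_BB {ω : ℤ → Bool} (hω : SpellsChacon ω) (n : ℕ) :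
    Occ ω (Bblock n ++ Bblock n) (-(L n : ℤ)) := by
  intro t ht
  have h2 := hω n t (by simpa [List.length_append, L, two_mul] using ht)
  have e : (t : ℤ) - ((Bblock n).length : ℤ) = -(L n : ℤ) + t := by
    simp [L]; ring
  rwa [e] at h2

lemma occ_neg {ω : ℤ → Bool} (hω : SpellsChacon ω) (n : ℕ) :
    Occ ω (Bblock n) (-(L n : ℤ)) := occ_append_left (occ_BB hω n)

lemma occ_zero {ω : ℤ → Bool} (hω : SpellsChacon ω) (n : ℕ) :
    Occ ω (Bblock n) 0 :=
  occ_congr (occ_append_right (occ_BB hω n)) (by simp [L])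

lemma occ_step {ω : ℤ → Bool} (r : ℕ) (p : ℤ) (h : Occ ω (Bblock (r + 1)) p) :
    Occ ω (Bblock r) p ∧ Occ ω (Bblock r) (p + L r) ∧
      Occ ω (Bblock r) (p + (2 * L r + 1)) := by
  have e : Bblock (r + 1) = Bblock r ++ (Bblock r ++ ([true] ++ Bblock r)) := by
    show Bblock r ++ Bblock r ++ [true] ++ Bblock r = _
    simp [List.append_assoc]
  rw [e] at h
  have h1 := occ_append_left h
  have h2 := occ_append_right h
  have h3 := occ_append_left h2
  have h4 := occ_append_right h2
  have h5 := occ_append_right h4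
  refine ⟨h1, occ_congr h3 (by simp [L]), occ_congr h5 (by simp [L]; ring)⟩

lemma occ_sum {ω : ℤ → Bool} (s : ℕ) (f : ℕ → ℤ) :
    ∀ k : ℕ, ∀ p : ℤ, Occ ω (Bblock (s + k)) p →
      (∀ j, j < k → f j = 0 ∨ f j = (L (s + j) : ℤ) ∨ f j = 2 * (L (s + j) : ℤ) + 1) →
      Occ ω (Bblock s) (p + ∑ j ∈ Finset.range k, f j) := by
  intro k
  induction k with
  | zero => intro p h _; simpa using h
  | succ k ih =>
    intro p h hf
    have h' : Occ ω (Bblock (s + k + 1)) p := by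
      have : s + (k + 1) = s + k + 1 := by ring
      rwa [this] at h
    obtain ⟨g0, g1, g2⟩ := occ_step (s + k) p h'
    have step : Occ ω (Bblock (s + k)) (p + f k) := by
      rcases hf k (by omega) with e | e | e
      · rw [e]; simpa using g0
      · rw [e]; exact_mod_cast g1
      · rw [e]; exact_mod_cast g2
    have := ih (p + f k) step (fun j hj => hf j (by omega))
    refine occ_congr this ?_
    rw [Finset.sum_range_succ]; ring

/-- the key coordinate-agreement lemma: any occurrence of `Bblock (m+1)` transports
the central window of `ω`. -/
lemma shift_agrees {ω : ℤ → Bool} (hω : SpellsChacon ω) (m N : ℕ) (P c : ℤ)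
    (hP : Occ ω (Bblock (m + 1)) P)
    (h1 : (N : ℤ) - (L m : ℤ) ≤ c) (h2 : c + (N : ℤ) < (L m : ℤ)) :
    ∀ j : ℤ, j.natAbs ≤ N → ω (j + (P + c + (L m : ℤ))) = ω (j + c) := by
  intro j hj
  obtain ⟨hB0, hB1, _⟩ := occ_step m P hP
  have hnn : 0 ≤ j + c + (L m : ℤ) := by omega
  have hub : j + c + (L m : ℤ) < 2 * (L m : ℤ) := by omega
  rcases lt_or_ge (j + c + (L m : ℤ)) (L m : ℤ) with hcase | hcase
  · set t : ℕ := (j + c + (L m : ℤ)).toNat with ht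
    have htZ : (t : ℤ) = j + c + (L m : ℤ) := Int.toNat_of_nonneg hnn
    have htl : t < L m := by omega
    have e1 : j + (P + c + (L m : ℤ)) = P + t := by rw [htZ]; ring
    have e2 : j + c = -(L m : ℤ) + t := by rw [htZ]; ring
    rw [e1, e2, hB0 t htl, occ_neg hω m t htl]
  · set t : ℕ := (j + c).toNat with ht
    have hjc : 0 ≤ j + c := by omega
    have htZ : (t : ℤ) = j + c := Int.toNat_of_nonneg hjc
    have htl : t < L m := by omega
    have e1 : j + (P + c + (L m : ℤ)) = (P + (L m : ℤ)) + t := by rw [htZ]; ring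
    have e2 : j + c = 0 + (t : ℤ) := by rw [htZ]; ring
    rw [e1, e2, hB1 t htl, occ_zero hω m t htl]

lemma orbit_mem {ω : ℤ → Bool} (q : ℤ) : shiftZ q ω ∈ chaconX ω :=
  subset_closure ⟨q, rfl⟩

lemma shift_shift (n q : ℤ) (ω : ℤ → Bool) : shiftZ n (shiftZ q ω) = shiftZ (q + n) ω := by
  funext i
  show ω (i + n + q) = ω (i + (q + n))
  ring_nf

/-- extract a cylinder neighbourhood around an orbit point from a relatively-nonempty
open set. -/
lemma exists_cyl {ω : ℤ → Bool} (U : Set (ℤ → Bool)) (hU : IsOpen U)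
    (hn : (U ∩ chaconX ω).Nonempty) :
    ∃ (a : ℤ) (N : ℕ), ∀ x : ℤ → Bool, (∀ j : ℤ, j.natAbs ≤ N → x j = ω (j + a)) → x ∈ U := by
  obtain ⟨x₀, hx₀U, hx₀X⟩ := hn
  have horb : (U ∩ Set.range fun n : ℤ => shiftZ n ω).Nonempty := by
    have := mem_closure_iff.mp hx₀X U hU hx₀U
    exact this
  obtain ⟨y, hyU, a, rfl⟩ := horb
  obtain ⟨I, u, hIu, hsub⟩ := isOpen_pi_iff.mp hU _ hyU
  refine ⟨a, I.sup (fun j => j.natAbs), fun x hx => hsub ?_⟩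
  intro j hj
  have : x j = shiftZ a ω j := hx j (Finset.le_sup hj)
  rw [this]
  exact (hIu j hj).2

/-- produce a witness for one pair `(U, V)` given occurrences `P`, `Q` of `Bblock (m+1)`. -/
lemma pair_witness {ω : ℤ → Bool} (hω : SpellsChacon ω) (m N : ℕ) (P Q a b : ℤ)
    (hP : Occ ω (Bblock (m + 1)) P) (hQ : Occ ω (Bblock (m + 1)) Q)
    (ha1 : (N : ℤ) - (L m : ℤ) ≤ a) (ha2 : a + (N : ℤ) < (L m : ℤ))
    (hb1 : (N : ℤ) - (L m : ℤ) ≤ b) (hb2 : b + (N : ℤ) < (L m : ℤ))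
    (U V : Set (ℤ → Bool))
    (hU : ∀ x : ℤ → Bool, (∀ j : ℤ, j.natAbs ≤ N → x j = ω (j + a)) → x ∈ U)
    (hV : ∀ x : ℤ → Bool, (∀ j : ℤ, j.natAbs ≤ N → x j = ω (j + b)) → x ∈ V) :
    (shiftZ (Q - P + b - a) '' (U ∩ chaconX ω) ∩ (V ∩ chaconX ω)).Nonempty := by
  set n : ℤ := Q - P + b - a with hn
  set m₁ : ℤ := P + a + (L m : ℤ) with hm₁
  refine ⟨shiftZ (m₁ + n) ω, ⟨shiftZ m₁ ω, ⟨?_, orbit_mem m₁⟩, ?_⟩, ?_, orbit_mem (m₁ + n)⟩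
  · refine hU _ (fun j hj => ?_)
    show ω (j + m₁) = ω (j + a)
    have := shift_agrees hω m N P a hP ha1 ha2 j hj
    rw [hm₁]; exact this
  · rw [shift_shift]
  · refine hV _ (fun j hj => ?_)
    show ω (j + (m₁ + n)) = ω (j + b)
    have := shift_agrees hω m N Q b hQ hb1 hb2 j hj
    convert this using 2
    rw [hm₁, hn]; ring

end ChaconAux

open ChaconAux in
/-- The Chacón system is weak mixing: for any four nonempty (relatively) open subsets
`U₁, U₂, V₁, V₂` of `X` there is `n ∈ ℤ` with `Sⁿ U₁ ∩ V₁ ≠ ∅` and `Sⁿ U₂ ∩ V₂ ≠ ∅`.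
Open subsets of `X` are represented as `U ∩ X` for `U` open in the ambient product space. -/
theorem chacon_weakMixing (ω : ℤ → Bool) (hω : SpellsChacon ω)
    (U₁ U₂ V₁ V₂ : Set (ℤ → Bool))
    (hU₁ : IsOpen U₁) (hU₂ : IsOpen U₂) (hV₁ : IsOpen V₁) (hV₂ : IsOpen V₂)
    (hU₁n : (U₁ ∩ chaconX ω).Nonempty) (hU₂n : (U₂ ∩ chaconX ω).Nonempty)
    (hV₁n : (V₁ ∩ chaconX ω).Nonempty) (hV₂n : (V₂ ∩ chaconX ω).Nonempty) :
    ∃ n : ℤ, (shiftZ n '' (U₁ ∩ chaconX ω) ∩ (V₁ ∩ chaconX ω)).Nonempty ∧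
      (shiftZ n '' (U₂ ∩ chaconX ω) ∩ (V₂ ∩ chaconX ω)).Nonempty := by
  classical
  obtain ⟨a₁, N₁, hC₁⟩ := exists_cyl U₁ hU₁ hU₁n
  obtain ⟨a₂, N₂, hC₂⟩ := exists_cyl U₂ hU₂ hU₂n
  obtain ⟨b₁, N₃, hC₃⟩ := exists_cyl V₁ hV₁ hV₁n
  obtain ⟨b₂, N₄, hC₄⟩ := exists_cyl V₂ hV₂ hV₂n
  set N : ℕ := max (max N₁ N₂) (max N₃ N₄) with hN
  have hC₁' : ∀ x : ℤ → Bool, (∀ j : ℤ, j.natAbs ≤ N → x j = ω (j + a₁)) → x ∈ U₁ :=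
    fun x h => hC₁ x (fun j hj => h j (by omega))
  have hC₂' : ∀ x : ℤ → Bool, (∀ j : ℤ, j.natAbs ≤ N → x j = ω (j + a₂)) → x ∈ U₂ :=
    fun x h => hC₂ x (fun j hj => h j (by omega))
  have hC₃' : ∀ x : ℤ → Bool, (∀ j : ℤ, j.natAbs ≤ N → x j = ω (j + b₁)) → x ∈ V₁ :=
    fun x h => hC₃ x (fun j hj => h j (by omega))
  have hC₄' : ∀ x : ℤ → Bool, (∀ j : ℤ, j.natAbs ≤ N → x j = ω (j + b₂)) → x ∈ V₂ :=
    fun x h => hC₄ x (fun j hj => h j (by omega))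
  -- choose the level `m`
  set m : ℕ := N + a₁.natAbs + a₂.natAbs + b₁.natAbs + b₂.natAbs with hm
  have hLm : (m : ℤ) + 4 ≤ (L m : ℤ) := by exact_mod_cast L_ge m
  have hmN : (N : ℤ) + a₁.natAbs + a₂.natAbs + b₁.natAbs + b₂.natAbs = (m : ℤ) := by
    rw [hm]; push_cast; ring
  have hba₁ : (N : ℤ) - (L m : ℤ) ≤ a₁ ∧ a₁ + (N : ℤ) < (L m : ℤ) := by omega
  have hba₂ : (N : ℤ) - (L m : ℤ) ≤ a₂ ∧ a₂ + (N : ℤ) < (L m : ℤ) := by omega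
  have hbb₁ : (N : ℤ) - (L m : ℤ) ≤ b₁ ∧ b₁ + (N : ℤ) < (L m : ℤ) := by omega
  have hbb₂ : (N : ℤ) - (L m : ℤ) ≤ b₂ ∧ b₂ + (N : ℤ) < (L m : ℤ) := by omega
  -- level above: s = m + 1; occurrences of Bblock s at 0, T, 2T + k
  set s : ℕ := m + 1 with hs
  set d : ℤ := (b₂ - a₂) - (b₁ - a₁) with hd
  set k : ℕ := d.natAbs with hk
  set T : ℤ := ∑ j ∈ Finset.range k, (L (s + j) : ℤ) with hT
  have hocc0 : Occ ω (Bblock s) 0 := occ_zero hω s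
  have hoccT : Occ ω (Bblock s) T := by
    have := occ_sum s (fun j => (L (s + j) : ℤ)) k 0 (occ_zero hω (s + k))
      (fun j _ => Or.inr (Or.inl rfl))
    simpa using this
  have hocc2 : Occ ω (Bblock s) (2 * T + k) := by
    have := occ_sum s (fun j => 2 * (L (s + j) : ℤ) + 1) k 0 (occ_zero hω (s + k))
      (fun j _ => Or.inr (Or.inr rfl))
    have e : (0 : ℤ) + ∑ j ∈ Finset.range k, (2 * (L (s + j) : ℤ) + 1) = 2 * T + k := by
      rw [Finset.sum_add_distrib, Finset.sum_const, Finset.card_range, hT,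
        ← Finset.mul_sum]
      ring
    rwa [e] at this
  rcases le_or_gt 0 d with hdpos | hdneg
  · -- d ≥ 0 : pair 1 uses (T, 2T + k), pair 2 uses (0, T)
    have hkd : (k : ℤ) = d := by omega
    refine ⟨(2 * T + k) - T + b₁ - a₁, ?_, ?_⟩
    · exact pair_witness hω m N T (2 * T + k) a₁ b₁ hoccT hocc2
        hba₁.1 hba₁.2 hbb₁.1 hbb₁.2 U₁ V₁ hC₁' hC₃'
    · have e : (2 * T + (k : ℤ)) - T + b₁ - a₁ = T - 0 + b₂ - a₂ := by
        rw [hkd, hd]; ring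
      rw [e]
      exact pair_witness hω m N 0 T a₂ b₂ hocc0 hoccT
        hba₂.1 hba₂.2 hbb₂.1 hbb₂.2 U₂ V₂ hC₂' hC₄'
  · -- d < 0 : pair 1 uses (0, T), pair 2 uses (T, 2T + k)
    have hkd : (k : ℤ) = -d := by omega
    refine ⟨T - 0 + b₁ - a₁, ?_, ?_⟩
    · exact pair_witness hω m N 0 T a₁ b₁ hocc0 hoccT
        hba₁.1 hba₁.2 hbb₁.1 hbb₁.2 U₁ V₁ hC₁' hC₃'
    · have e : T - 0 + b₁ - a₁ = (2 * T + (k : ℤ)) - T + b₂ - a₂ := by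
        rw [hkd, hd]; ring
      rw [e]
      exact pair_witness hω m N T (2 * T + k) a₂ b₂ hoccT hocc2
        hba₂.1 hba₂.2 hbb₂.1 hbb₂.2 U₂ V₂ hC₂' hC₄'
end

section
/- The Chacón system (X, ℤ) is not strong mixing: there exist nonempty open sets U, V ⊆ X (one may take U = V to be the cylinder set of points whose coordinates at positions 0,1,2,3 spell 0010) such that for every finite set F ⊆ ℤ there exists n ∈ ℤ \ F with Sⁿ U ∩ V = ∅. In fact Sⁿ U ∩ U = ∅ for every n of the form n = (3^{m+1} − 3)/2 with m ∈ ℕ. -/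
namespace Chacon

abbrev L (n : ℕ) : ℕ := (Bblock n).length

lemma L_zero : L 0 = 4 := rfl

lemma L_succ (n : ℕ) : L (n + 1) = 3 * L n + 1 := by
  show (Bblock n ++ Bblock n ++ [true] ++ Bblock n).length = _
  simp [List.length_append]; ring

lemma four_le_L (n : ℕ) : 4 ≤ L n := by
  induction n with
  | zero => simp [L_zero]
  | succ n ih => rw [L_succ]; omega

lemma L_ge (n : ℕ) : n + 4 ≤ L n := by
  induction n with
  | zero => simp [L_zero]
  | succ n ih => rw [L_succ]; omega

lemma two_L (n : ℕ) : 2 * L n + 1 = 3 ^ (n + 2) := by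
  induction n with
  | zero => rw [L_zero]; norm_num
  | succ n ih =>
    rw [L_succ, show n + 1 + 2 = (n + 2) + 1 from rfl, pow_succ]
    omega

lemma L_lt_pow (n : ℕ) : L n < 3 ^ (n + 2) := by
  have := two_L n; omega

def startPos : ℕ → ℕ → ℕ
  | 0, _ => 0
  | N + 1, j =>
    if j < 3 ^ N then startPos N j
    else if j < 2 * 3 ^ N then L N + startPos N (j - 3 ^ N)
    else 2 * L N + 1 + startPos N (j - 2 * 3 ^ N)

lemma startPos_succ (N j : ℕ) : startPos (N + 1) j =
    if j < 3 ^ N then startPos N j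
    else if j < 2 * 3 ^ N then L N + startPos N (j - 3 ^ N)
    else 2 * L N + 1 + startPos N (j - 2 * 3 ^ N) := rfl

def occursAt (l : List Bool) (p : ℕ) : Prop :=
  p + 3 < l.length ∧ l.getD p false = false ∧ l.getD (p + 1) false = false ∧
    l.getD (p + 2) false = true ∧ l.getD (p + 3) false = false

lemma bblock_succ (n : ℕ) :
    Bblock (n + 1) = (Bblock n ++ Bblock n) ++ ([true] ++ Bblock n) := by
  show Bblock n ++ Bblock n ++ [true] ++ Bblock n = _
  simp [List.append_assoc]

lemma prefix_eq (n : ℕ) : ∃ z, Bblock n = [false, false, true, false] ++ z := by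
  induction n with
  | zero => exact ⟨[], rfl⟩
  | succ n ih =>
    obtain ⟨z, hz⟩ := ih
    exact ⟨z ++ Bblock n ++ [true] ++ Bblock n, by
      show Bblock n ++ Bblock n ++ [true] ++ Bblock n = _
      rw [hz]; simp [List.append_assoc]⟩

lemma suffix_eq (n : ℕ) : ∃ z, Bblock n = z ++ [false, true, false] := by
  induction n with
  | zero => exact ⟨[false], rfl⟩
  | succ n ih =>
    obtain ⟨z, hz⟩ := ih
    exact ⟨Bblock n ++ Bblock n ++ [true] ++ z, by
      show Bblock n ++ Bblock n ++ [true] ++ Bblock n = _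
      rw [hz]; simp [List.append_assoc]⟩

lemma head_letters (n : ℕ) :
    (Bblock n).getD 0 false = false ∧ (Bblock n).getD 1 false = false ∧
      (Bblock n).getD 2 false = true := by
  obtain ⟨z, hz⟩ := prefix_eq n
  rw [hz]
  refine ⟨?_, ?_, ?_⟩ <;> rw [List.getD_append] <;> simp

lemma tail_letters (n : ℕ) (q : ℕ) (hq : q + 3 = L n) :
    (Bblock n).getD q false = false ∧ (Bblock n).getD (q + 1) false = true ∧
      (Bblock n).getD (q + 2) false = false := by
  obtain ⟨z, hz⟩ := suffix_eq n
  have hlen : z.length = q := by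
    have : L n = z.length + 3 := by rw [show L n = (Bblock n).length from rfl, hz]; simp
    omega
  rw [hz]
  refine ⟨?_, ?_, ?_⟩ <;> rw [List.getD_append_right _ _ _ _ (by omega)] <;>
    simp [hlen]


lemma len_eq (n : ℕ) : (Bblock n).length = L n := rfl

lemma getD_piece1 (n i : ℕ) (h : i < L n) :
    (Bblock (n + 1)).getD i false = (Bblock n).getD i false := by
  rw [bblock_succ, List.getD_append _ _ _ _ (by simp [List.length_append, len_eq]; omega),
    List.getD_append _ _ _ _ h]

lemma getD_piece2 (n i : ℕ) (h : i < L n) :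
    (Bblock (n + 1)).getD (L n + i) false = (Bblock n).getD i false := by
  rw [bblock_succ, List.getD_append _ _ _ _ (by simp [List.length_append, len_eq]; omega),
    List.getD_append_right _ _ _ _ (by simp [len_eq])]
  congr 1
  simp [len_eq]

lemma getD_spacer (n : ℕ) : (Bblock (n + 1)).getD (2 * L n) false = true := by
  rw [bblock_succ, List.getD_append_right _ _ _ _ (by simp [List.length_append, len_eq]; omega)]
  have : 2 * L n - (Bblock n ++ Bblock n).length = 0 := by simp [List.length_append, len_eq]; omega
  rw [this]
  rfl

lemma getD_piece3 (n i : ℕ) :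
    (Bblock (n + 1)).getD (2 * L n + 1 + i) false = (Bblock n).getD i false := by
  rw [bblock_succ, List.getD_append_right _ _ _ _ (by simp [List.length_append, len_eq]; omega)]
  have h1 : 2 * L n + 1 + i - (Bblock n ++ Bblock n).length = 1 + i := by
    simp [List.length_append, len_eq]; omega
  rw [h1, show ([true] ++ Bblock n : List Bool) = true :: Bblock n from rfl]
  rw [show 1 + i = i + 1 by omega]
  rfl

lemma length_succ (n : ℕ) : (Bblock (n + 1)).length = 3 * L n + 1 := L_succ n

lemma occursAt_prefix {X Y : List Bool} {p : ℕ} (h : occursAt X p) : occursAt (X ++ Y) p := by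
  obtain ⟨hb, h0, h1, h2, h3⟩ := h
  refine ⟨by simp [List.length_append]; omega, ?_, ?_, ?_, ?_⟩ <;>
    rw [List.getD_append _ _ _ _ (by omega)] <;> assumption

lemma occursAt_of_piece1 {n p : ℕ} (h : occursAt (Bblock (n + 1)) p) (hb : p + 3 < L n) :
    occursAt (Bblock n) p := by
  obtain ⟨_, h0, h1, h2, h3⟩ := h
  exact ⟨hb, by rw [← getD_piece1 n p (by omega)]; exact h0,
    by rw [← getD_piece1 n (p + 1) (by omega)]; exact h1,
    by rw [← getD_piece1 n (p + 2) (by omega)]; exact h2,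
    by rw [← getD_piece1 n (p + 3) (by omega)]; exact h3⟩

lemma occursAt_of_piece2 {n q : ℕ} (h : occursAt (Bblock (n + 1)) (L n + q))
    (hb : q + 3 < L n) : occursAt (Bblock n) q := by
  obtain ⟨_, h0, h1, h2, h3⟩ := h
  refine ⟨hb, ?_, ?_, ?_, ?_⟩
  · rw [← getD_piece2 n q (by omega)]; exact h0
  · rw [← getD_piece2 n (q + 1) (by omega)]; rw [show L n + q + 1 = L n + (q+1) by omega] at h1; exact h1
  · rw [← getD_piece2 n (q + 2) (by omega)]; rw [show L n + q + 2 = L n + (q+2) by omega] at h2; exact h2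
  · rw [← getD_piece2 n (q + 3) (by omega)]; rw [show L n + q + 3 = L n + (q+3) by omega] at h3; exact h3

lemma occursAt_of_piece3 {n q : ℕ} (h : occursAt (Bblock (n + 1)) (2 * L n + 1 + q))
    (hb : q + 3 < L n) : occursAt (Bblock n) q := by
  obtain ⟨_, h0, h1, h2, h3⟩ := h
  refine ⟨hb, ?_, ?_, ?_, ?_⟩
  · rw [← getD_piece3 n q]; exact h0
  · rw [← getD_piece3 n (q + 1)]; rw [show 2 * L n + 1 + q + 1 = 2 * L n + 1 + (q+1) by omega] at h1; exact h1
  · rw [← getD_piece3 n (q + 2)]; rw [show 2 * L n + 1 + q + 2 = 2 * L n + 1 + (q+2) by omega] at h2; exact h2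
  · rw [← getD_piece3 n (q + 3)]; rw [show 2 * L n + 1 + q + 3 = 2 * L n + 1 + (q+3) by omega] at h3; exact h3


lemma pow3_succ (N : ℕ) : (3:ℕ) ^ (N + 1) = 3 ^ N * 3 := pow_succ 3 N

lemma pow3_pos (N : ℕ) : 1 ≤ (3:ℕ) ^ N := Nat.one_le_pow _ _ (by norm_num)

lemma aligned (N : ℕ) : ∀ p, occursAt (Bblock N) p → ∃ j, j < 3 ^ N ∧ startPos N j = p := by
  induction N with
  | zero =>
    intro p h
    have hb := h.1
    have h4 : (Bblock 0).length = 4 := rfl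
    have : p = 0 := by omega
    exact ⟨0, by norm_num, by rw [this]; rfl⟩
  | succ N ih =>
    intro p h
    have hb := h.1
    rw [len_eq, L_succ] at hb
    have hL4 := four_le_L N
    have hp3 := pow3_succ N
    have hpp := pow3_pos N
    rcases (by omega : p + 3 < L N ∨ p + 3 = L N ∨ p + 2 = L N ∨ p + 1 = L N ∨
        (L N ≤ p ∧ p + 3 < 2 * L N) ∨ p + 3 = 2 * L N ∨ p + 2 = 2 * L N ∨
        p + 1 = 2 * L N ∨ p = 2 * L N ∨ 2 * L N + 1 ≤ p) with
      h1 | h1 | h1 | h1 | h1 | h1 | h1 | h1 | h1 | h1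
    · obtain ⟨j, hj, hs⟩ := ih p (occursAt_of_piece1 h h1)
      refine ⟨j, by omega, ?_⟩
      show startPos (N + 1) j = p
      rw [startPos_succ]
      rw [if_pos hj]
      exact hs
    · have hv := h.2.2.1
      rw [getD_piece1 N (p + 1) (by omega), (tail_letters N p h1).2.1] at hv
      simp at hv
    · have hq : (p - 1) + 3 = L N := by omega
      have hv := h.2.1
      rw [getD_piece1 N p (by omega)] at hv
      have ht := (tail_letters N (p - 1) hq).2.1
      rw [show (p - 1) + 1 = p by omega] at ht
      rw [ht] at hv
      simp at hv
    · have hv := h.2.2.2.1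
      rw [show p + 2 = L N + 1 by omega, getD_piece2 N 1 (by omega),
        (head_letters N).2.1] at hv
      simp at hv
    · obtain ⟨q, hq, hqb⟩ : ∃ q, p = L N + q ∧ q + 3 < L N := ⟨p - L N, by omega, by omega⟩
      rw [hq] at h
      obtain ⟨j, hj, hs⟩ := ih q (occursAt_of_piece2 h hqb)
      refine ⟨3 ^ N + j, by omega, ?_⟩
      rw [hq]
      show startPos (N + 1) (3 ^ N + j) = L N + q
      rw [startPos_succ]
      rw [if_neg (by omega), if_pos (by omega), show 3 ^ N + j - 3 ^ N = j by omega, hs]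
    · have hv := h.2.2.2.2
      rw [show p + 3 = 2 * L N by omega, getD_spacer N] at hv
      simp at hv
    · obtain ⟨i, hi, hi2⟩ : ∃ i, p = L N + i ∧ i + 2 = L N := ⟨p - L N, by omega, by omega⟩
      have hv := h.2.1
      rw [hi, getD_piece2 N i (by omega)] at hv
      have ht := (tail_letters N (i - 1) (by omega)).2.1
      rw [show (i - 1) + 1 = i by omega] at ht
      rw [ht] at hv
      simp at hv
    · have hv := h.2.2.1
      rw [show p + 1 = 2 * L N by omega, getD_spacer N] at hv
      simp at hv
    · have hv := h.2.1
      rw [h1, getD_spacer N] at hv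
      simp at hv
    · obtain ⟨q, hq, hqb⟩ : ∃ q, p = 2 * L N + 1 + q ∧ q + 3 < L N :=
        ⟨p - (2 * L N + 1), by omega, by omega⟩
      rw [hq] at h
      obtain ⟨j, hj, hs⟩ := ih q (occursAt_of_piece3 h hqb)
      refine ⟨2 * 3 ^ N + j, by omega, ?_⟩
      rw [hq]
      show startPos (N + 1) (2 * 3 ^ N + j) = 2 * L N + 1 + q
      rw [startPos_succ]
      rw [if_neg (by omega), if_neg (by omega), show 2 * 3 ^ N + j - 2 * 3 ^ N = j by omega, hs]


lemma startPos_zero (N : ℕ) : startPos N 0 = 0 := by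
  induction N with
  | zero => rfl
  | succ N ih =>
    show startPos (N + 1) 0 = 0
    rw [startPos_succ]
    rw [if_pos (by have := pow3_pos N; omega)]
    exact ih

lemma carry (N : ℕ) : ∀ k s t, k ≤ N → 3 ^ k + t = 3 ^ N → s < 3 ^ k →
    startPos N (s + t) + L k = startPos N s + L N := by
  induction N with
  | zero =>
    intro k s t hk ht hs
    have hk0 : k = 0 := Nat.le_zero.mp hk
    subst hk0
    have : t = 0 := by simp at ht; omega
    subst this
    simp
  | succ N ih =>
    intro k s t hk ht hs
    rcases eq_or_lt_of_le hk with rfl | hkN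
    · have : t = 0 := by omega
      subst this
      simp
    · have hk' : k ≤ N := by omega
      have hpow : (3:ℕ) ^ k ≤ 3 ^ N := Nat.pow_le_pow_right (by norm_num) hk'
      have hp3 := pow3_succ N
      obtain ⟨t', ht1, ht2⟩ : ∃ t', t = 2 * 3 ^ N + t' ∧ 3 ^ k + t' = 3 ^ N :=
        ⟨t - 2 * 3 ^ N, by omega, by omega⟩
      have e1 : startPos (N + 1) (s + t) = 2 * L N + 1 + startPos N (s + t') := by
        show startPos (N + 1) (s + t) = _
        rw [startPos_succ]
        rw [if_neg (by omega), if_neg (by omega), show s + t - 2 * 3 ^ N = s + t' by omega]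
      have e2 : startPos (N + 1) s = startPos N s := by
        show startPos (N + 1) s = _
        rw [startPos_succ]
        rw [if_pos (by omega)]
      have e3 := ih k s t' hk' ht2 hs
      rw [e1, e2, L_succ]
      omega

lemma jump (N : ℕ) : ∀ k j, j + 3 ^ k < 3 ^ N →
    startPos N (j + 3 ^ k) = startPos N j + L k ∨
      startPos N (j + 3 ^ k) = startPos N j + L k + 1 := by
  induction N with
  | zero =>
    intro k j h
    have := pow3_pos k
    simp at h
  | succ N ih =>
    intro k j h
    have hp3 := pow3_succ N
    have hpp := pow3_pos N
    have hppk := pow3_pos k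
    have hk : k ≤ N := by
      by_contra hc
      have : (3:ℕ) ^ (N + 1) ≤ 3 ^ k := Nat.pow_le_pow_right (by norm_num) (by omega)
      omega
    have hpow : (3:ℕ) ^ k ≤ 3 ^ N := Nat.pow_le_pow_right (by norm_num) hk
    rcases (by omega : j + 3 ^ k < 3 ^ N ∨ (3 ^ N ≤ j ∧ j + 3 ^ k < 2 * 3 ^ N) ∨
        2 * 3 ^ N ≤ j ∨ (j < 3 ^ N ∧ 3 ^ N ≤ j + 3 ^ k) ∨
        (3 ^ N ≤ j ∧ j < 2 * 3 ^ N ∧ 2 * 3 ^ N ≤ j + 3 ^ k)) with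
      hc | hc | hc | hc | hc
    · have e1 : startPos (N + 1) (j + 3 ^ k) = startPos N (j + 3 ^ k) := by
        rw [startPos_succ]; rw [if_pos hc]
      have e2 : startPos (N + 1) j = startPos N j := by
        rw [startPos_succ]; rw [if_pos (by omega)]
      rw [e1, e2]; exact ih k j hc
    · obtain ⟨q, hq⟩ : ∃ q, j = 3 ^ N + q := ⟨j - 3 ^ N, by omega⟩
      have e1 : startPos (N + 1) (j + 3 ^ k) = L N + startPos N (q + 3 ^ k) := by
        rw [startPos_succ]
        rw [if_neg (by omega), if_pos (by omega), show j + 3 ^ k - 3 ^ N = q + 3 ^ k by omega]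
      have e2 : startPos (N + 1) j = L N + startPos N q := by
        rw [startPos_succ]
        rw [if_neg (by omega), if_pos (by omega), show j - 3 ^ N = q by omega]
      rw [e1, e2]
      rcases ih k q (by omega) with h' | h' <;> omega
    · obtain ⟨q, hq⟩ : ∃ q, j = 2 * 3 ^ N + q := ⟨j - 2 * 3 ^ N, by omega⟩
      have e1 : startPos (N + 1) (j + 3 ^ k) = 2 * L N + 1 + startPos N (q + 3 ^ k) := by
        rw [startPos_succ]
        rw [if_neg (by omega), if_neg (by omega),
          show j + 3 ^ k - 2 * 3 ^ N = q + 3 ^ k by omega]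
      have e2 : startPos (N + 1) j = 2 * L N + 1 + startPos N q := by
        rw [startPos_succ]
        rw [if_neg (by omega), if_neg (by omega), show j - 2 * 3 ^ N = q by omega]
      rw [e1, e2]
      rcases ih k q (by omega) with h' | h' <;> omega
    · -- crossing the first boundary
      obtain ⟨s, hs1, hs2⟩ : ∃ s, j + 3 ^ k = 3 ^ N + s ∧ s < 3 ^ k :=
        ⟨j + 3 ^ k - 3 ^ N, by omega, by omega⟩
      have hst : j = s + (3 ^ N - 3 ^ k) := by omega
      have hcar := carry N k s (3 ^ N - 3 ^ k) hk (by omega) hs2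
      have e1 : startPos (N + 1) (j + 3 ^ k) = L N + startPos N s := by
        rw [startPos_succ]
        rw [if_neg (by omega), if_pos (by omega), show j + 3 ^ k - 3 ^ N = s by omega]
      have e2 : startPos (N + 1) j = startPos N (s + (3 ^ N - 3 ^ k)) := by
        rw [startPos_succ]
        rw [if_pos (by omega), ← hst]
      rw [e1, e2]
      omega
    · -- crossing the spacer boundary
      obtain ⟨s, hs1, hs2⟩ : ∃ s, j + 3 ^ k = 2 * 3 ^ N + s ∧ s < 3 ^ k :=
        ⟨j + 3 ^ k - 2 * 3 ^ N, by omega, by omega⟩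
      have hcar := carry N k s (3 ^ N - 3 ^ k) hk (by omega) hs2
      have e1 : startPos (N + 1) (j + 3 ^ k) = 2 * L N + 1 + startPos N s := by
        rw [startPos_succ]
        rw [if_neg (by omega), if_neg (by omega), show j + 3 ^ k - 2 * 3 ^ N = s by omega]
      have e2 : startPos (N + 1) j = L N + startPos N (s + (3 ^ N - 3 ^ k)) := by
        rw [startPos_succ]
        rw [if_neg (by omega), if_pos (by omega), show j - 3 ^ N = s + (3 ^ N - 3 ^ k) by omega]
      rw [e1, e2]
      omega

lemma startPos_step (N j : ℕ) (h : j + 1 < 3 ^ N) :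
    startPos N j + 4 ≤ startPos N (j + 1) := by
  have hj := jump N 0 j (by simpa using h)
  rw [pow_zero] at hj
  have : L 0 = 4 := rfl
  omega

lemma startPos_mono_add (N : ℕ) : ∀ t i, i + t < 3 ^ N →
    startPos N i + 4 * t ≤ startPos N (i + t) := by
  intro t
  induction t with
  | zero => intro i _; simp
  | succ t ih =>
    intro i h
    have h1 := ih i (by omega)
    have h2 := startPos_step N (i + t) (by omega)
    have : i + (t + 1) = (i + t) + 1 := by omega
    rw [this]
    omega

lemma bblock_prefix (N d : ℕ) : ∃ z, Bblock (N + d) = Bblock N ++ z := by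
  induction d with
  | zero => exact ⟨[], by simp⟩
  | succ d ih =>
    obtain ⟨z, hz⟩ := ih
    refine ⟨z ++ Bblock (N + d) ++ [true] ++ Bblock (N + d), ?_⟩
    show Bblock (N + d) ++ Bblock (N + d) ++ [true] ++ Bblock (N + d) = _
    rw [hz]
    simp [List.append_assoc]

lemma noTwo (k N p : ℕ) (h1 : occursAt (Bblock N) p)
    (h2 : occursAt (Bblock N) (p + (L k - 1))) : False := by
  set M := N + k + 3 with hM
  obtain ⟨z, hz⟩ := bblock_prefix N (k + 3)
  have hM' : Bblock M = Bblock N ++ z := hz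
  have H1 : occursAt (Bblock M) p := by rw [hM']; exact occursAt_prefix h1
  have H2 : occursAt (Bblock M) (p + (L k - 1)) := by rw [hM']; exact occursAt_prefix h2
  obtain ⟨i, hi, hpi⟩ := aligned M p H1
  obtain ⟨j, hj, hpj⟩ := aligned M (p + (L k - 1)) H2
  have hLk := four_le_L k
  have hp_lt : p < L N := by have := h1.1; rw [len_eq] at this; omega
  have hLN : L N < 3 ^ (N + 2) := L_lt_pow N
  have hi4 : 4 * i ≤ startPos M i := by
    have := startPos_mono_add M i 0 (by omega)
    simpa [startPos_zero] using this
  have hple1 : (3:ℕ) ^ (N + 2) ≤ 3 ^ (N + k + 2) := Nat.pow_le_pow_right (by norm_num) (by omega)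
  have hple2 : (3:ℕ) ^ k ≤ 3 ^ (N + k + 2) := Nat.pow_le_pow_right (by norm_num) (by omega)
  have hp3 : (3:ℕ) ^ M = 3 ^ (N + k + 2) * 3 := by rw [hM]; exact pow3_succ (N + k + 2)
  have hbound : i + 3 ^ k < 3 ^ M := by omega
  have hjump := jump M k i hbound
  rcases le_or_gt (i + 3 ^ k) j with hcase1 | hcase2
  · have hm := startPos_mono_add M (j - (i + 3 ^ k)) (i + 3 ^ k) (by omega)
    rw [show i + 3 ^ k + (j - (i + 3 ^ k)) = j by omega] at hm
    omega
  · have hm := startPos_mono_add M (i + 3 ^ k - j) j (by omega)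
    rw [show j + (i + 3 ^ k - j) = i + 3 ^ k by omega] at hm
    omega



def patternAt (ω : ℤ → Bool) (z : ℤ) : Prop :=
  ω z = false ∧ ω (z + 1) = false ∧ ω (z + 2) = true ∧ ω (z + 3) = false

lemma no_pattern_pair (ω : ℤ → Bool) (hω : SpellsChacon ω) (k : ℕ) (z : ℤ)
    (h1 : patternAt ω z) (h2 : patternAt ω (z + ((L k - 1 : ℕ) : ℤ))) : False := by
  set t := z.natAbs + L k + 4 with ht
  have hLt : (z.natAbs + L k + 4) + 4 ≤ L t := L_ge t
  have hLk := four_le_L k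
  have hz1 : (0:ℤ) ≤ z + (L t : ℤ) := by omega
  set P := (z + (L t : ℤ)).toNat with hPdef
  have hPz : (P : ℤ) = z + (L t : ℤ) := Int.toNat_of_nonneg hz1
  have hPb : P + (L k - 1) + 3 + 1 ≤ 2 * L t := by omega
  have hlen2 : (Bblock t ++ Bblock t).length = 2 * L t := by
    simp [List.length_append, len_eq]; omega
  have key : ∀ q : ℕ, q < 2 * L t →
      (Bblock t ++ Bblock t).getD q false = ω ((q : ℤ) - (L t : ℤ)) := by
    intro q hq
    exact (hω t q (by rw [len_eq]; exact hq)).symm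
  have hO1 : occursAt (Bblock t ++ Bblock t) P := by
    refine ⟨by omega, ?_, ?_, ?_, ?_⟩
    · rw [key P (by omega), show (P : ℤ) - (L t : ℤ) = z by omega]; exact h1.1
    · rw [key (P + 1) (by omega), show ((P + 1 : ℕ) : ℤ) - (L t : ℤ) = z + 1 by push_cast; omega]
      exact h1.2.1
    · rw [key (P + 2) (by omega), show ((P + 2 : ℕ) : ℤ) - (L t : ℤ) = z + 2 by push_cast; omega]
      exact h1.2.2.1
    · rw [key (P + 3) (by omega), show ((P + 3 : ℕ) : ℤ) - (L t : ℤ) = z + 3 by push_cast; omega]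
      exact h1.2.2.2
  have hO2 : occursAt (Bblock t ++ Bblock t) (P + (L k - 1)) := by
    refine ⟨by omega, ?_, ?_, ?_, ?_⟩
    · rw [key (P + (L k - 1)) (by omega),
        show ((P + (L k - 1) : ℕ) : ℤ) - (L t : ℤ) = z + ((L k - 1 : ℕ) : ℤ) by push_cast; omega]
      exact h2.1
    · rw [key (P + (L k - 1) + 1) (by omega),
        show ((P + (L k - 1) + 1 : ℕ) : ℤ) - (L t : ℤ) = z + ((L k - 1 : ℕ) : ℤ) + 1 by
          push_cast; omega]
      exact h2.2.1
    · rw [key (P + (L k - 1) + 2) (by omega),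
        show ((P + (L k - 1) + 2 : ℕ) : ℤ) - (L t : ℤ) = z + ((L k - 1 : ℕ) : ℤ) + 2 by
          push_cast; omega]
      exact h2.2.2.1
    · rw [key (P + (L k - 1) + 3) (by omega),
        show ((P + (L k - 1) + 3 : ℕ) : ℤ) - (L t : ℤ) = z + ((L k - 1 : ℕ) : ℤ) + 3 by
          push_cast; omega]
      exact h2.2.2.2
  have hO1' : occursAt (Bblock (t + 1)) P := by
    rw [bblock_succ]; exact occursAt_prefix hO1
  have hO2' : occursAt (Bblock (t + 1)) (P + (L k - 1)) := by
    rw [bblock_succ]; exact occursAt_prefix hO2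
  exact noTwo k (t + 1) P hO1' hO2'



lemma isOpen_coord (i : ℤ) (b : Bool) : IsOpen {x : ℤ → Bool | x i = b} := by
  have h : {x : ℤ → Bool | x i = b} = (fun x : ℤ → Bool => x i) ⁻¹' {b} := rfl
  rw [h]
  exact IsOpen.preimage (continuous_apply i) (isOpen_discrete {b})

lemma L_strictMono : StrictMono L :=
  strictMono_nat_of_lt_succ fun n => by rw [L_succ]; have := four_le_L n; omega

theorem main (ω : ℤ → Bool) (hω : SpellsChacon ω) :
    ∃ U V : Set (ℤ → Bool),
      U = {x : ℤ → Bool | x 0 = false ∧ x 1 = false ∧ x 2 = true ∧ x 3 = false} ∧ V = U ∧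
      IsOpen U ∧ IsOpen V ∧ (U ∩ chaconX ω).Nonempty ∧ (V ∩ chaconX ω).Nonempty ∧
      (∀ F : Finset ℤ, ∃ n : ℤ, n ∉ F ∧
        shiftZ n '' (U ∩ chaconX ω) ∩ (V ∩ chaconX ω) = ∅) ∧
      (∀ m : ℕ, 1 ≤ m →
        shiftZ ((3 ^ (m + 1) - 3) / 2) '' (U ∩ chaconX ω) ∩ (U ∩ chaconX ω) = ∅) := by
  set U : Set (ℤ → Bool) :=
    {x : ℤ → Bool | x 0 = false ∧ x 1 = false ∧ x 2 = true ∧ x 3 = false} with hU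
  have hUopen : IsOpen U := by
    have : U = {x : ℤ → Bool | x 0 = false} ∩ ({x : ℤ → Bool | x 1 = false} ∩
        ({x : ℤ → Bool | x 2 = true} ∩ {x : ℤ → Bool | x 3 = false})) := by
      ext x; simp [hU, Set.mem_setOf_eq, and_assoc]
    rw [this]
    exact (isOpen_coord 0 false).inter ((isOpen_coord 1 false).inter
      ((isOpen_coord 2 true).inter (isOpen_coord 3 false)))
  have hωU : ω ∈ U := by
    have h4 := hω 0 4 (by norm_num [len_eq, L_zero])
    have h5 := hω 0 5 (by norm_num [len_eq, L_zero])
    have h6 := hω 0 6 (by norm_num [len_eq, L_zero])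
    have h7 := hω 0 7 (by norm_num [len_eq, L_zero])
    norm_num [Bblock, List.getD] at h4 h5 h6 h7
    exact ⟨h4, h5, h6, h7⟩
  have hωX : ω ∈ chaconX ω := subset_closure ⟨0, by funext i; simp [shiftZ]⟩
  have core : ∀ k : ℕ, shiftZ ((L k : ℤ) - 1) '' (U ∩ chaconX ω) ∩ (U ∩ chaconX ω) = ∅ := by
    intro k
    have hLk := four_le_L k
    have hcast : ((L k : ℤ) - 1) = ((L k - 1 : ℕ) : ℤ) := by omega
    rw [Set.eq_empty_iff_forall_notMem]
    rintro x ⟨⟨y, ⟨hyU, hyX⟩, rfl⟩, hxU, hxX⟩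
    set n : ℤ := (L k : ℤ) - 1 with hn
    set O : Set (ℤ → Bool) := {v : ℤ → Bool | v 0 = false ∧ v 1 = false ∧ v 2 = true ∧
      v 3 = false ∧ v n = false ∧ v (n + 1) = false ∧ v (n + 2) = true ∧
      v (n + 3) = false} with hO
    have hOopen : IsOpen O := by
      have : O = {x : ℤ → Bool | x 0 = false} ∩ ({x : ℤ → Bool | x 1 = false} ∩
          ({x : ℤ → Bool | x 2 = true} ∩ ({x : ℤ → Bool | x 3 = false} ∩
          ({x : ℤ → Bool | x n = false} ∩ ({x : ℤ → Bool | x (n+1) = false} ∩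
          ({x : ℤ → Bool | x (n+2) = true} ∩ {x : ℤ → Bool | x (n+3) = false})))))) := by
        ext x; simp [hO, Set.mem_setOf_eq, and_assoc]
      rw [this]
      exact (isOpen_coord _ _).inter ((isOpen_coord _ _).inter ((isOpen_coord _ _).inter
        ((isOpen_coord _ _).inter ((isOpen_coord _ _).inter ((isOpen_coord _ _).inter
        ((isOpen_coord _ _).inter (isOpen_coord _ _)))))))
    have hyO : y ∈ O := by
      obtain ⟨a0, a1, a2, a3⟩ := hyU
      obtain ⟨b0, b1, b2, b3⟩ := hxU
      refine ⟨a0, a1, a2, a3, ?_, ?_, ?_, ?_⟩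
      · show y n = false
        have : shiftZ n y 0 = false := b0
        simpa [shiftZ] using this
      · show y (n + 1) = false
        have : shiftZ n y 1 = false := b1
        rw [show n + 1 = 1 + n by ring]
        simpa [shiftZ] using this
      · show y (n + 2) = true
        have : shiftZ n y 2 = true := b2
        rw [show n + 2 = 2 + n by ring]
        simpa [shiftZ] using this
      · show y (n + 3) = false
        have : shiftZ n y 3 = false := b3
        rw [show n + 3 = 3 + n by ring]
        simpa [shiftZ] using this
    have hyX' : y ∈ closure (Set.range fun c : ℤ => shiftZ c ω) := hyX
    obtain ⟨w, hwO, c, hc⟩ := mem_closure_iff.mp hyX' O hOopen hyO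
    have hw : ∀ i : ℤ, w i = ω (i + c) := fun i => by rw [← hc]; rfl
    obtain ⟨c0, c1, c2, c3, c4, c5, c6, c7⟩ := hwO
    apply no_pattern_pair ω hω k c
    · refine ⟨?_, ?_, ?_, ?_⟩
      · rw [show c = 0 + c by ring, ← hw 0]; exact c0
      · rw [show c + 1 = 1 + c by ring, ← hw 1]; exact c1
      · rw [show c + 2 = 2 + c by ring, ← hw 2]; exact c2
      · rw [show c + 3 = 3 + c by ring, ← hw 3]; exact c3
    · rw [← hcast]
      refine ⟨?_, ?_, ?_, ?_⟩
      · rw [show c + n = n + c by ring, ← hw n]; exact c4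
      · rw [show c + n + 1 = (n + 1) + c by ring, ← hw (n + 1)]; exact c5
      · rw [show c + n + 2 = (n + 2) + c by ring, ← hw (n + 2)]; exact c6
      · rw [show c + n + 3 = (n + 3) + c by ring, ← hw (n + 3)]; exact c7
  refine ⟨U, U, rfl, rfl, hUopen, hUopen, ⟨ω, hωU, hωX⟩, ⟨ω, hωU, hωX⟩, ?_, ?_⟩
  · intro F
    have hinj : Function.Injective (fun k : ℕ => ((L k : ℤ) - 1)) := by
      intro a b hab
      simp only [sub_left_inj, Int.natCast_inj] at hab
      exact L_strictMono.injective hab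
    obtain ⟨nn, hmem, hnot⟩ := (Set.infinite_range_of_injective hinj).exists_notMem_finset F
    obtain ⟨k, hk⟩ := hmem
    exact ⟨nn, hnot, by rw [← hk]; exact core k⟩
  · intro m hm
    obtain ⟨k, rfl⟩ : ∃ k, m = k + 1 := ⟨m - 1, by omega⟩
    have h2L := two_L k
    have hpow : ((3:ℤ) ^ (k + 2)) = 2 * (L k : ℤ) + 1 := by
      have : ((2 * L k + 1 : ℕ) : ℤ) = ((3 ^ (k + 2) : ℕ) : ℤ) := by rw [h2L]
      push_cast at this
      omega
    have heq : ((3:ℤ) ^ (k + 1 + 1) - 3) / 2 = (L k : ℤ) - 1 := by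
      rw [show k + 1 + 1 = k + 2 from rfl, hpow,
        show 2 * (L k : ℤ) + 1 - 3 = 2 * ((L k : ℤ) - 1) by ring,
        Int.mul_ediv_cancel_left _ (by norm_num)]
    rw [heq]
    exact core k

end Chacon

/-- The Chacón system is not strong mixing: one may take `U = V` to be the cylinder set of
points spelling `0010` at positions `0,1,2,3`; then for every finite `F ⊆ ℤ` there is
`n ∉ F` with `Sⁿ U ∩ V = ∅`, and in fact `Sⁿ U ∩ U = ∅` for every
`n = (3^{m+1} - 3)/2` with `m ∈ ℕ`, `m ≥ 1`. -/
theorem chacon_not_strongMixing (ω : ℤ → Bool) (hω : SpellsChacon ω) :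
    ∃ U V : Set (ℤ → Bool),
      U = {x : ℤ → Bool | x 0 = false ∧ x 1 = false ∧ x 2 = true ∧ x 3 = false} ∧ V = U ∧
      IsOpen U ∧ IsOpen V ∧ (U ∩ chaconX ω).Nonempty ∧ (V ∩ chaconX ω).Nonempty ∧
      (∀ F : Finset ℤ, ∃ n : ℤ, n ∉ F ∧
        shiftZ n '' (U ∩ chaconX ω) ∩ (V ∩ chaconX ω) = ∅) ∧
      (∀ m : ℕ, 1 ≤ m →
        shiftZ ((3 ^ (m + 1) - 3) / 2) '' (U ∩ chaconX ω) ∩ (U ∩ chaconX ω) = ∅) :=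
  Chacon.main ω hω
end

section
/- The Chacón system (X, ℤ) is thick strong mixing: there exists a thick set N ⊆ ℤ such that for every pair of nonempty open sets U, V ⊆ X there is a finite set F ⊆ N with Sⁿ U ∩ V ≠ ∅ for all n ∈ N \ F. -/
namespace ChaconAux

def lB (n : ℕ) : ℕ := (Bblock n).length

lemma Bblock_succ (n : ℕ) :
    Bblock (n + 1) = Bblock n ++ (Bblock n ++ ([true] ++ Bblock n)) := by
  show Bblock n ++ Bblock n ++ [true] ++ Bblock n = _
  simp [List.append_assoc]

lemma lB_succ (n : ℕ) : lB (n + 1) = 3 * lB n + 1 := by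
  simp [lB, Bblock_succ, List.length_append]; ring

lemma lB_zero : lB 0 = 4 := rfl

lemma lB_ge (n : ℕ) : n + 4 ≤ lB n := by
  induction n with
  | zero => simp [lB_zero]
  | succ n ih => rw [lB_succ]; omega

lemma lB_mono : Monotone lB :=
  monotone_nat_of_le_succ (fun n => by rw [lB_succ]; omega)

def OccAt (w s : List Bool) (p : ℕ) : Prop :=
  p + w.length ≤ s.length ∧ ∀ j, j < w.length → s.getD (p + j) false = w.getD j false

lemma occAt_refl (w : List Bool) : OccAt w w 0 :=
  ⟨by simp, fun j _ => by simp⟩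

lemma occAt_trans {w s t : List Bool} {p q : ℕ} (h1 : OccAt w s p) (h2 : OccAt s t q) :
    OccAt w t (q + p) := by
  obtain ⟨hl1, he1⟩ := h1
  obtain ⟨hl2, he2⟩ := h2
  refine ⟨by omega, fun j hj => ?_⟩
  rw [show q + p + j = q + (p + j) by ring, he2 (p + j) (by omega), he1 j hj]

lemma occ_block0 (n : ℕ) : OccAt (Bblock n) (Bblock (n + 1)) 0 := by
  refine ⟨?_, fun j hj => ?_⟩
  · show 0 + lB n ≤ lB (n+1); rw [lB_succ]; omega
  · rw [Bblock_succ, Nat.zero_add, List.getD_append _ _ _ _ hj]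

lemma occ_block1 (n : ℕ) : OccAt (Bblock n) (Bblock (n + 1)) (lB n) := by
  refine ⟨?_, fun j hj => ?_⟩
  · show lB n + lB n ≤ lB (n+1); rw [lB_succ]; omega
  · rw [Bblock_succ, List.getD_append_right _ _ _ _ (by show lB n ≤ lB n + j; omega)]
    show (Bblock n ++ ([true] ++ Bblock n)).getD (lB n + j - lB n) false = _
    rw [Nat.add_sub_cancel_left, List.getD_append _ _ _ _ hj]

lemma occ_block2 (n : ℕ) : OccAt (Bblock n) (Bblock (n + 1)) (2 * lB n + 1) := by
  refine ⟨?_, fun j hj => ?_⟩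
  · show 2 * lB n + 1 + lB n ≤ lB (n+1); rw [lB_succ]; omega
  · rw [Bblock_succ, List.getD_append_right _ _ _ _ (by show lB n ≤ 2 * lB n + 1 + j; omega)]
    show (Bblock n ++ ([true] ++ Bblock n)).getD (2 * lB n + 1 + j - lB n) false = _
    rw [List.getD_append_right _ _ _ _ (by show lB n ≤ 2 * lB n + 1 + j - lB n; omega)]
    show ([true] ++ Bblock n).getD (2 * lB n + 1 + j - lB n - lB n) false = _
    rw [show 2 * lB n + 1 + j - lB n - lB n = 1 + j by omega,
      List.getD_append_right _ _ _ _ (by simp)]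
    rw [show 1 + j - List.length [true] = j from by simp]

lemma occ_prefix {a b : ℕ} (h : a ≤ b) : OccAt (Bblock a) (Bblock b) 0 := by
  induction b, h using Nat.le_induction with
  | base => exact occAt_refl _
  | succ b hb ih => exact occAt_trans ih (occ_block0 b)

/-- the ladder lemma: occurrences at distance `∑ l + t` for any `t ≤ j`. -/
lemma ladder (m j : ℕ) : ∀ t, t ≤ j →
    ∃ p q : ℕ, OccAt (Bblock m) (Bblock (m + j)) p ∧ OccAt (Bblock m) (Bblock (m + j)) q ∧
      q = p + (∑ i ∈ Finset.range j, lB (m + i)) + t := by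
  induction j with
  | zero => intro t ht
            exact ⟨0, 0, occAt_refl _, occAt_refl _, by simpa using (by omega : t = 0).symm ▸ rfl⟩
  | succ j ih =>
    intro t ht
    rcases Nat.lt_or_ge t (j + 1) with h | h
    · obtain ⟨p, q, hp, hq, hpq⟩ := ih t (by omega)
      refine ⟨0 + p, lB (m + j) + q,
        occAt_trans hp (occ_block0 (m + j)), occAt_trans hq (occ_block1 (m + j)), ?_⟩
      rw [Finset.sum_range_succ]; omega
    · have ht' : t = j + 1 := by omega
      obtain ⟨p, q, hp, hq, hpq⟩ := ih j le_rfl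
      refine ⟨lB (m + j) + p, (2 * lB (m + j) + 1) + q,
        occAt_trans hp (occ_block1 (m + j)), occAt_trans hq (occ_block2 (m + j)), ?_⟩
      rw [Finset.sum_range_succ]; omega

def Ck (k : ℕ) : ℤ :=
  (∑ i ∈ Finset.range (2 * k), (lB (3 * k + i) : ℤ)) -
    ∑ i ∈ Finset.range (2 * k), (lB (k + i) : ℤ)

lemma twosided (k : ℕ) (tS tT : ℕ) (hS : tS ≤ 2 * k) (hT : tT ≤ 2 * k) :
    ∃ p q : ℕ, OccAt (Bblock k) (Bblock (5 * k)) p ∧ OccAt (Bblock k) (Bblock (5 * k)) q ∧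
      (q : ℤ) - (p : ℤ) = Ck k + tS - tT := by
  obtain ⟨p₁, q₁, hp₁, hq₁, h₁⟩ := ladder k (2 * k) tT hT
  obtain ⟨p₂, q₂, hp₂, hq₂, h₂⟩ := ladder (3 * k) (2 * k) tS hS
  have e3 : k + 2 * k = 3 * k := by ring
  have e5 : 3 * k + 2 * k = 5 * k := by ring
  rw [e3] at hp₁ hq₁
  rw [e5] at hp₂ hq₂
  refine ⟨p₂ + q₁, q₂ + p₁, occAt_trans hq₁ hp₂, occAt_trans hp₁ hq₂, ?_⟩
  have h₁' : (q₁ : ℤ) = p₁ + (∑ i ∈ Finset.range (2 * k), (lB (k + i) : ℤ)) + tT := by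
    rw [h₁]; push_cast; ring
  have h₂' : (q₂ : ℤ) = p₂ + (∑ i ∈ Finset.range (2 * k), (lB (3 * k + i) : ℤ)) + tS := by
    rw [h₂]; push_cast; ring
  rw [Ck]; push_cast; rw [h₁', h₂']; ring

lemma mainOcc (K k : ℕ) (hKk : K + 1 ≤ k) (s : ℤ) (hs : |s| ≤ 2 * k) :
    ∃ p q : ℕ, OccAt (Bblock (K + 1)) (Bblock (5 * k)) p ∧
      OccAt (Bblock (K + 1)) (Bblock (5 * k)) q ∧ (q : ℤ) - (p : ℤ) = Ck k + s := by
  obtain ⟨p, q, hp, hq, hpq⟩ := twosided k s.toNat (-s).toNat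
    (by rw [abs_le] at hs; omega) (by rw [abs_le] at hs; omega)
  refine ⟨p + 0, q + 0, occAt_trans (occ_prefix hKk) hp, occAt_trans (occ_prefix hKk) hq, ?_⟩
  have : ((s.toNat : ℤ)) - ((-s).toNat : ℤ) = s := by omega
  push_cast
  rw [add_zero, add_zero, hpq]
  omega

lemma sum_lB_le (m : ℕ) : ∑ i ∈ Finset.range m, lB i ≤ lB m := by
  induction m with
  | zero => simp
  | succ m ih => rw [Finset.sum_range_succ, lB_succ]; omega

lemma Ck_le (k : ℕ) : Ck k ≤ (lB (5 * k) : ℤ) := by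
  have h1 : ∑ i ∈ Finset.range (2 * k), lB (3 * k + i) ≤ lB (5 * k) := by
    have : ∑ i ∈ Finset.range (2 * k), lB (3 * k + i)
        = ∑ i ∈ Finset.Ico (3 * k) (3 * k + 2 * k), lB i := by
      rw [Finset.sum_Ico_eq_sum_range]; simp
    rw [this]
    calc ∑ i ∈ Finset.Ico (3 * k) (3 * k + 2 * k), lB i
        ≤ ∑ i ∈ Finset.range (5 * k), lB i := by
          apply Finset.sum_le_sum_of_subset
          intro x hx
          simp only [Finset.mem_Ico] at hx
          simp only [Finset.mem_range]
          omega
      _ ≤ lB (5 * k) := sum_lB_le _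
  have h2 : (0 : ℤ) ≤ ∑ i ∈ Finset.range (2 * k), (lB (k + i) : ℤ) :=
    Finset.sum_nonneg fun i _ => by positivity
  have h1' : (∑ i ∈ Finset.range (2 * k), (lB (3 * k + i) : ℤ)) ≤ (lB (5 * k) : ℤ) := by
    exact_mod_cast h1
  rw [Ck]; omega

lemma Ck_ge (k : ℕ) (hk : 1 ≤ k) : (2 * k : ℤ) ≤ Ck k := by
  have key : ∀ i ∈ Finset.range (2 * k), (lB (k + i) : ℤ) + 1 ≤ (lB (3 * k + i) : ℤ) := by
    intro i _
    have h1 : lB (k + i) + 1 ≤ lB (k + i + 1) := by rw [lB_succ]; omega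
    have h2 : lB (k + i + 1) ≤ lB (3 * k + i) := lB_mono (by omega)
    exact_mod_cast le_trans h1 h2
  have := Finset.sum_le_sum key
  rw [Finset.sum_add_distrib] at this
  simp only [Finset.sum_const, Finset.card_range, nsmul_eq_mul, mul_one] at this
  rw [Ck]; push_cast at this ⊢; omega

lemma omega_prefix {ω : ℤ → Bool} (hω : SpellsChacon ω) (M j : ℕ) (hj : j < lB M) :
    ω (j : ℤ) = (Bblock M).getD j false := by
  have h := hω M (j + lB M) (by show j + lB M < 2 * lB M; omega)
  have e : ((j + lB M : ℕ) : ℤ) - ((Bblock M).length : ℤ) = (j : ℤ) := by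
    show _ - (lB M : ℤ) = _; push_cast; ring
  rw [e] at h
  rw [h, List.getD_append_right _ _ _ _ (by show lB M ≤ j + lB M; omega)]
  congr 1
  show j + lB M - lB M = j
  omega

lemma getD_B_succ_low (n j : ℕ) (hj : j < 2 * lB n) :
    (Bblock (n + 1)).getD j false = (Bblock n ++ Bblock n).getD j false := by
  rcases Nat.lt_or_ge j (lB n) with h | h
  · rw [Bblock_succ, List.getD_append _ _ _ _ h, List.getD_append _ _ _ _ h]
  · rw [Bblock_succ, List.getD_append_right _ _ _ _ h, List.getD_append_right _ _ _ _ h]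
    show (Bblock n ++ ([true] ++ Bblock n)).getD (j - lB n) false = _
    rw [List.getD_append _ _ _ _ (by show j - lB n < lB n; omega)]
    rfl

lemma omega_center {ω : ℤ → Bool} (hω : SpellsChacon ω) (K : ℕ) (i : ℤ)
    (h1 : -(lB K : ℤ) ≤ i) (h2 : i < (lB K : ℤ)) :
    ω i = (Bblock K ++ Bblock K).getD (i + lB K).toNat false := by
  have hj : (i + lB K).toNat < 2 * (Bblock K).length := by
    show _ < 2 * lB K; omega
  have h := hω K (i + lB K).toNat hj
  have e : (((i + lB K).toNat : ℕ) : ℤ) - ((Bblock K).length : ℤ) = i := by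
    show _ - (lB K : ℤ) = i; omega
  rw [e] at h
  exact h

/-- The key window lemma: around position `p + l_K` (for `p` an occurrence of `B_{K+1}`
in the prefix `B_M` of `ω`), `ω` repeats its central window. -/
lemma window {ω : ℤ → Bool} (hω : SpellsChacon ω) {K M : ℕ} {p : ℕ}
    (hocc : OccAt (Bblock (K + 1)) (Bblock M) p) (i : ℤ)
    (h1 : -(lB K : ℤ) ≤ i) (h2 : i < (lB K : ℤ)) :
    ω ((p : ℤ) + (lB K : ℤ) + i) = ω i := by
  set j : ℕ := (i + lB K).toNat with hjdef
  have hj2 : (j : ℤ) = i + lB K := by omega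
  have hjlt : j < 2 * lB K := by omega
  have hjlt' : j < lB (K + 1) := by rw [lB_succ]; omega
  have hplen : p + lB (K + 1) ≤ lB M := hocc.1
  have e1 : (p : ℤ) + (lB K : ℤ) + i = ((p + j : ℕ) : ℤ) := by push_cast; omega
  rw [e1, omega_prefix hω M (p + j) (by omega), hocc.2 j hjlt', getD_B_succ_low K j hjlt,
    ← omega_center hω K i h1 h2]

/-- The thick set. -/
def NN : Set ℤ := {n : ℤ | ∃ k : ℕ, 1 ≤ k ∧ |n - Ck k| ≤ (k : ℤ)}

lemma shiftZ_shiftZ (n t : ℤ) (x : ℤ → Bool) :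
    shiftZ n (shiftZ t x) = shiftZ (t + n) x := by
  funext i; show x (i + n + t) = x (i + (t + n)); congr 1; ring

lemma shift_mem_chaconX (ω : ℤ → Bool) (t : ℤ) : shiftZ t ω ∈ chaconX ω :=
  subset_closure ⟨t, rfl⟩

lemma cyl_open (c : ℤ → Bool) (r : ℕ) :
    IsOpen {y : ℤ → Bool | ∀ i : ℤ, i.natAbs ≤ r → y i = c i} := by
  have he : {y : ℤ → Bool | ∀ i : ℤ, i.natAbs ≤ r → y i = c i}
      = ⋂ i ∈ Finset.Icc (-(r : ℤ)) (r : ℤ), {y : ℤ → Bool | y i = c i} := by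
    ext y
    simp only [Set.mem_setOf_eq, Set.mem_iInter, Finset.mem_Icc]
    constructor
    · intro h i hi; exact h i (by omega)
    · intro h i hi; exact h i (by omega)
  rw [he]
  refine isOpen_biInter_finset fun i _ => ?_
  show IsOpen ((fun y : ℤ → Bool => y i) ⁻¹' {c i})
  exact (isOpen_discrete {c i}).preimage (continuous_apply i)

lemma orbit_cyl {ω : ℤ → Bool} (U : Set (ℤ → Bool)) (hU : IsOpen U)
    (h : (U ∩ chaconX ω).Nonempty) :
    ∃ (r : ℕ) (m : ℤ), {y : ℤ → Bool | ∀ i : ℤ, i.natAbs ≤ r → y i = ω (i + m)} ⊆ U := by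
  obtain ⟨x₀, hx₀U, hx₀X⟩ := h
  obtain ⟨I, u, hu, hsub⟩ := isOpen_pi_iff.mp hU x₀ hx₀U
  set r : ℕ := I.sup Int.natAbs with hr
  have hcylsub : {y : ℤ → Bool | ∀ i : ℤ, i.natAbs ≤ r → y i = x₀ i} ⊆ U := by
    intro y hy
    apply hsub
    intro a ha
    have : y a = x₀ a := hy a (Finset.le_sup ha)
    rw [this]; exact (hu a ha).2
  have hx₀cyl : x₀ ∈ {y : ℤ → Bool | ∀ i : ℤ, i.natAbs ≤ r → y i = x₀ i} :=
    fun i _ => rfl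
  have hne := (_root_.mem_closure_iff.mp hx₀X) _ (cyl_open x₀ r) hx₀cyl
  obtain ⟨y, hycyl, m, rfl⟩ := hne
  refine ⟨r, m, fun z hz => hcylsub fun i hi => ?_⟩
  have h1 : ω (i + m) = x₀ i := hycyl i hi
  rw [hz i hi, h1]

end ChaconAux

open ChaconAux in
/-- The Chacón system is thick strong mixing: there is a thick set `N ⊆ ℤ` such that for
every pair of nonempty (relatively) open subsets `U, V` of `X` there is a finite `F ⊆ N`
with `Sⁿ U ∩ V ≠ ∅` for all `n ∈ N \ F`. Here `N ⊆ ℤ` is thick if for every finite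
`F ⊆ ℤ`, `N ∩ ⋂_{γ ∈ F} (γ + N) ≠ ∅`. -/
theorem chacon_thickStrongMixing (ω : ℤ → Bool) (hω : SpellsChacon ω) :
    ∃ N : Set ℤ, (∀ F : Finset ℤ, (N ∩ ⋂ γ ∈ F, (γ + ·) '' N).Nonempty) ∧
      ∀ U V : Set (ℤ → Bool), IsOpen U → IsOpen V →
        (U ∩ chaconX ω).Nonempty → (V ∩ chaconX ω).Nonempty →
        ∃ F : Finset ℤ, ↑F ⊆ N ∧ ∀ n ∈ N \ (↑F : Set ℤ),
          (shiftZ n '' (U ∩ chaconX ω) ∩ (V ∩ chaconX ω)).Nonempty := by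
  refine ⟨NN, ?_, ?_⟩
  · -- thickness
    intro F
    set R : ℕ := F.sup Int.natAbs with hR
    set k : ℕ := R + 1 with hk
    refine ⟨Ck k, ⟨k, by omega, by simp⟩, ?_⟩
    rw [Set.mem_iInter₂]
    intro γ hγ
    refine ⟨Ck k - γ, ⟨k, by omega, ?_⟩, by ring⟩
    have : γ.natAbs ≤ R := Finset.le_sup hγ
    have : |Ck k - γ - Ck k| = |γ| := by rw [show Ck k - γ - Ck k = -γ by ring, abs_neg]
    rw [this]
    rw [Int.abs_eq_natAbs]
    omega
  · -- mixing
    intro U V hU hV hUne hVne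
    obtain ⟨rU, mU, hUsub⟩ := orbit_cyl U hU hUne
    obtain ⟨rV, mV, hVsub⟩ := orbit_cyl V hV hVne
    set K : ℕ := rU + rV + mU.natAbs + mV.natAbs with hK
    set c : ℤ := mV - mU with hc
    set k₁ : ℕ := K + 1 + c.natAbs with hk₁
    set M₀ : ℤ := 2 * (lB (5 * k₁) : ℤ) with hM₀
    have hfin : (NN ∩ Set.Icc (-M₀) M₀).Finite :=
      (Set.finite_Icc _ _).subset Set.inter_subset_right
    refine ⟨hfin.toFinset, by rw [Set.Finite.coe_toFinset]; exact Set.inter_subset_left, ?_⟩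
    intro n hn
    rw [Set.mem_diff, Set.Finite.coe_toFinset] at hn
    obtain ⟨⟨k, hk1, hnk⟩, hnF⟩ := hn
    have hnIcc : ¬(-M₀ ≤ n ∧ n ≤ M₀) := by
      intro hcon
      exact hnF ⟨⟨k, hk1, hnk⟩, hcon.1, hcon.2⟩
    rw [abs_le] at hnk
    -- n is large, so k > k₁
    have hkk₁ : k₁ < k := by
      by_contra hcon
      push_neg at hcon
      have h1 : Ck k ≤ (lB (5 * k) : ℤ) := Ck_le k
      have h2 : (lB (5 * k) : ℤ) ≤ (lB (5 * k₁) : ℤ) := by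
        exact_mod_cast lB_mono (by omega)
      have h3 : (k : ℤ) ≤ (lB (5 * k₁) : ℤ) := by
        have := lB_ge (5 * k₁); omega
      have h4 : (2 * k : ℤ) ≤ Ck k := Ck_ge k hk1
      exact hnIcc ⟨by omega, by omega⟩
    have hKk : K + 1 ≤ k := by omega
    have hck : |c| ≤ (k : ℤ) := by rw [Int.abs_eq_natAbs]; omega
    rw [abs_le] at hck
    -- get occurrences
    obtain ⟨p, q, hp, hq, hpq⟩ := mainOcc K k hKk (n - Ck k - c)
      (by rw [abs_le]; constructor <;> omega)
    have hdiff : (q : ℤ) - (p : ℤ) = n - c := by rw [hpq]; ring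
    obtain ⟨hlK1, hlK2⟩ : rU + mU.natAbs + 4 ≤ lB K ∧ rV + mV.natAbs + 4 ≤ lB K := by
      have := lB_ge K; omega
    set x : ℤ → Bool := shiftZ ((p : ℤ) + (lB K : ℤ) + mU) ω with hx
    have hxU : x ∈ U := by
      apply hUsub
      intro i hi
      show ω (i + ((p : ℤ) + (lB K : ℤ) + mU)) = ω (i + mU)
      have e : i + ((p : ℤ) + (lB K : ℤ) + mU) = (p : ℤ) + (lB K : ℤ) + (i + mU) := by ring
      rw [e]
      apply window hω hp
      · omega
      · omega
    have hxX : x ∈ chaconX ω := shift_mem_chaconX ω _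
    have hyeq : shiftZ n x = shiftZ ((q : ℤ) + (lB K : ℤ) + mV) ω := by
      rw [hx, shiftZ_shiftZ]
      have harg : (p : ℤ) + (lB K : ℤ) + mU + n = (q : ℤ) + (lB K : ℤ) + mV := by omega
      rw [harg]
    have hyV : shiftZ n x ∈ V := by
      rw [hyeq]
      apply hVsub
      intro i hi
      show ω (i + ((q : ℤ) + (lB K : ℤ) + mV)) = ω (i + mV)
      have e : i + ((q : ℤ) + (lB K : ℤ) + mV) = (q : ℤ) + (lB K : ℤ) + (i + mV) := by ring
      rw [e]
      apply window hω hq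
      · omega
      · omega
    have hyX : shiftZ n x ∈ chaconX ω := by
      rw [hyeq]; exact shift_mem_chaconX ω _
    exact ⟨shiftZ n x, ⟨x, ⟨hxU, hxX⟩, rfl⟩, hyV, hyX⟩
end

section
/- Let X be a second countable topological space and let Γ be a second countable, locally compact, Hausdorff topological group acting continuously on X. If (X, Γ) is k-transitive for every k ∈ ℕ, then (X, Γ) is thick strong mixing. -/
open Pointwise

/-- The system `(X, G)` is weak mixing: for all nonempty open `U₁, U₂, V₁, V₂ ⊆ X`
there is `γ ∈ G` with `γU₁ ∩ V₁ ≠ ∅` and `γU₂ ∩ V₂ ≠ ∅`. -/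
def WeakMixing (G : Type*) (X : Type*) [Group G] [TopologicalSpace X] [MulAction G X] :
    Prop :=
  ∀ U₁ U₂ V₁ V₂ : Set X, IsOpen U₁ → U₁.Nonempty → IsOpen U₂ → U₂.Nonempty →
    IsOpen V₁ → V₁.Nonempty → IsOpen V₂ → V₂.Nonempty →
    ∃ γ : G, ((γ • U₁) ∩ V₁).Nonempty ∧ ((γ • U₂) ∩ V₂).Nonempty

open Set Filter

/-!
Write `N(U, V) = {γ : γU ∩ V ≠ ∅}`. Continuity of the action and compactness upgrade
`k`-transitivity to: for every compact `K` and finitely many pairs of nonempty open sets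
`(Uᵢ, Vᵢ)` there is `x` with `K x ⊆ N(Uᵢ, Vᵢ)` for all `i`. Enumerate the pairs of sets from a
countable basis and exhaust `Γ` by compact sets `Kₙ ∋ 1`; choosing `xₙ` for `Kₙ` and the first
`n` pairs, the set `N = ⋃ₙ Kₙ xₙ` is thick because `xₙ` and `γ⁻¹ xₙ` lie in `Kₙ xₙ` once
`γ⁻¹ ∈ Kₙ`, and a given pair of basis sets is mixed by all of `N` outside finitely many of the
compact pieces `Kₙ xₙ`.
-/

theorem exists_isOpen_one_mem_smul_subset {M X : Type*} [Monoid M] [MulAction M X]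
    [TopologicalSpace M] [TopologicalSpace X] [ContinuousSMul M X] {V : Set X}
    (hVo : IsOpen V) (hVne : V.Nonempty) :
    ∃ (Q : Set M) (W : Set X), IsOpen Q ∧ (1 : M) ∈ Q ∧ IsOpen W ∧ W.Nonempty ∧
      ∀ q ∈ Q, q • W ⊆ V := by
  obtain ⟨v, hv⟩ := hVne
  have hmem : ((1 : M), v) ∈ (fun p : M × X => p.1 • p.2) ⁻¹' V := by simpa using hv
  obtain ⟨Q, W, hQ, hW, h1, hvW, hsub⟩ :=
    isOpen_prod_iff.1 (hVo.preimage continuous_smul) 1 v hmem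
  exact ⟨Q, W, hQ, h1, hW, ⟨v, hvW⟩, fun q hq _ ⟨w, hw, hqw⟩ => hqw ▸ hsub (mk_mem_prod hq hw)⟩

theorem IsCompact.exists_finset_mul_mem {G : Type*} [Group G] [TopologicalSpace G]
    [ContinuousMul G] {K Q : Set G} (hK : IsCompact K) (hQo : IsOpen Q) (hQne : Q.Nonempty) :
    ∃ t : Finset G, ∀ k ∈ K, ∃ g ∈ t, k * g ∈ Q := by
  obtain ⟨q, hq⟩ := hQne
  obtain ⟨t, ht⟩ := hK.elim_finite_subcover (fun g => (· * g) ⁻¹' Q)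
    (fun g => hQo.preimage (continuous_mul_const g))
    fun k _ => mem_iUnion.2 ⟨k⁻¹ * q, by simpa [← mul_assoc] using hq⟩
  exact ⟨t, fun k hk => by simpa using ht hk⟩

section NSet

variable {G X : Type*} [Group G] [MulAction G X]

theorem NSet_mono {U U' V V' : Set X} (hU : U ⊆ U') (hV : V ⊆ V') :
    NSet G U V ⊆ NSet G U' V' :=
  fun _ ⟨y, hyU, hyV⟩ => ⟨y, smul_set_mono hU hyU, hV hyV⟩

theorem mul_mem_NSet {U V W : Set X} {k x : G} (hx : x ∈ NSet G U W) (hk : k • W ⊆ V) :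
    k * x ∈ NSet G U V := by
  obtain ⟨y, hyU, hyW⟩ := hx
  refine ⟨k • y, ?_, hk (smul_mem_smul_set hyW)⟩
  rw [mul_smul]
  exact smul_mem_smul_set hyU

variable [TopologicalSpace X]

theorem IsKTrans.exists_forall_mem_NSet {ι : Type*} [Finite ι] (h : IsKTrans G X (Nat.card ι))
    (U V : ι → Set X) (hUo : ∀ i, IsOpen (U i)) (hUne : ∀ i, (U i).Nonempty)
    (hVo : ∀ i, IsOpen (V i)) (hVne : ∀ i, (V i).Nonempty) :
    ∃ γ : G, ∀ i, γ ∈ NSet G (U i) (V i) := by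
  let e := Finite.equivFin ι
  obtain ⟨γ, hγ⟩ := h (U ∘ e.symm) (V ∘ e.symm) (fun _ => hUo _) (fun _ => hUne _)
    (fun _ => hVo _) (fun _ => hVne _)
  exact ⟨γ, fun i => by simpa [NSet] using hγ (e i)⟩

theorem exists_forall_mul_mem_NSet_of_isCompact [TopologicalSpace G] [ContinuousMul G]
    [ContinuousSMul G X] (h : ∀ k, IsKTrans G X k) {K : Set G} (hK : IsCompact K)
    {ι : Type*} [Finite ι] (U V : ι → Set X) (hUo : ∀ i, IsOpen (U i))
    (hUne : ∀ i, (U i).Nonempty) (hVo : ∀ i, IsOpen (V i)) (hVne : ∀ i, (V i).Nonempty) :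
    ∃ x : G, ∀ i, ∀ k ∈ K, k * x ∈ NSet G (U i) (V i) := by
  choose Q W hQo hQ1 hWo hWne hQW using fun i =>
    exists_isOpen_one_mem_smul_subset (M := G) (hVo i) (hVne i)
  choose t ht using fun i => hK.exists_finset_mul_mem (hQo i) ⟨1, hQ1 i⟩
  -- `x` is chosen for the pairs `(Uᵢ, g • Wᵢ)`, `g ∈ tᵢ`; every `k ∈ K` is `q g⁻¹` with `q ∈ Qᵢ`.
  obtain ⟨x, hx⟩ := (h _).exists_forall_mem_NSet (ι := Σ i, t i)
    (fun p => U p.1) (fun p => (p.2 : G) • W p.1) (fun _ => hUo _) (fun _ => hUne _)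
    (fun p => (hWo p.1).smul _) (fun p => (hWne p.1).smul_set)
  refine ⟨x, fun i k hk => ?_⟩
  obtain ⟨g, hg, hkg⟩ := ht i k hk
  exact mul_mem_NSet (hx ⟨i, g, hg⟩) (by rw [smul_smul]; exact hQW i _ hkg)

end NSet

section Thick

variable {G : Type*} [Group G] [TopologicalSpace G] [SigmaCompactSpace G]

theorem isThick_iUnion_image_mul_compactCovering (x : ℕ → G) :
    IsThick (⋃ n, (· * x n) '' insert 1 (compactCovering G n)) := by
  intro F
  have hev : ∀ γ ∈ F, ∀ᶠ n in atTop, γ⁻¹ ∈ compactCovering G n := fun γ _ =>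
    let ⟨n, hn⟩ := exists_mem_compactCovering γ⁻¹
    eventually_atTop.2 ⟨n, fun _ hm => compactCovering_subset G hm hn⟩
  obtain ⟨n, hn⟩ := ((eventually_all_finset F).2 hev).exists
  refine ⟨x n, mem_iUnion.2 ⟨n, 1, mem_insert _ _, one_mul _⟩, mem_iInter₂.2 fun γ hγ => ?_⟩
  exact mem_smul_set_iff_inv_smul_mem.2
    (mem_iUnion.2 ⟨n, γ⁻¹, mem_insert_of_mem _ (hn γ hγ), rfl⟩)

theorem exists_isThick_forall_diff_isCompact_subset [ContinuousMul G] {ι : Type*} [Countable ι]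
    (A : ι → Set G)
    (hA : ∀ K, IsCompact K → ∀ s : Set ι, s.Finite → ∃ x, ∀ i ∈ s, ∀ k ∈ K, k * x ∈ A i) :
    ∃ N : Set G, IsThick N ∧ ∀ i, ∃ F, IsCompact F ∧ F ⊆ N ∧ N \ F ⊆ A i := by
  obtain ⟨e, he⟩ := exists_injective_nat ι
  have hK : ∀ n, IsCompact (insert 1 (compactCovering G n)) := fun n =>
    (isCompact_compactCovering G n).insert 1
  choose x hx using fun n => hA _ (hK n) (e ⁻¹' Iio n) ((finite_Iio n).preimage he.injOn)
  set piece : ℕ → Set G := fun n => (· * x n) '' insert 1 (compactCovering G n)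
  refine ⟨⋃ n, piece n, isThick_iUnion_image_mul_compactCovering x, fun i =>
    ⟨⋃ n ∈ Iic (e i), piece n, ?_, iUnion₂_subset fun n _ => subset_iUnion piece n, ?_⟩⟩
  · exact (finite_Iic (e i)).isCompact_biUnion fun n _ =>
      (hK n).image (continuous_mul_const (x n))
  · rintro γ ⟨hγN, hγF⟩
    obtain ⟨n, hn⟩ := mem_iUnion.1 hγN
    have hin : e i < n := lt_of_not_ge fun hle => hγF (mem_biUnion hle hn)
    obtain ⟨k, hk, rfl⟩ := hn
    exact hx n i hin k hk

end Thick

theorem kTrans_implies_thickStrongMixing_general {X Γ : Type*} [TopologicalSpace X]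
    [SecondCountableTopology X] [Group Γ] [TopologicalSpace Γ] [IsTopologicalGroup Γ]
    [SecondCountableTopology Γ] [LocallyCompactSpace Γ]
    [MulAction Γ X] [ContinuousSMul Γ X]
    (h : ∀ k : ℕ, IsKTrans Γ X k) :
    ThickStrongMixing Γ X := by
  obtain ⟨B, hBc, hBne, hB⟩ := TopologicalSpace.exists_countable_basis X
  have hBne' : ∀ b ∈ B, b.Nonempty := fun b hb => nonempty_iff_ne_empty.2 fun h => hBne (h ▸ hb)
  have : Countable ↥(B ×ˢ B) := (hBc.prod hBc).to_subtype
  obtain ⟨N, hN, hmix⟩ := exists_isThick_forall_diff_isCompact_subset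
    (fun p : ↥(B ×ˢ B) => NSet Γ p.1.1 p.1.2) fun K hK s hs => by
      have := hs.to_subtype
      obtain ⟨x, hx⟩ := exists_forall_mul_mem_NSet_of_isCompact h hK (ι := s)
        (fun p => p.1.1.1) (fun p => p.1.1.2) (fun p => hB.isOpen p.1.2.1)
        (fun p => hBne' _ p.1.2.1) (fun p => hB.isOpen p.1.2.2) (fun p => hBne' _ p.1.2.2)
      exact ⟨x, fun p hp => hx ⟨p, hp⟩⟩
  refine ⟨N, hN, fun U V hUo ⟨u, hu⟩ hVo ⟨v, hv⟩ => ?_⟩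
  obtain ⟨b, hb, -, hbU⟩ := hB.exists_subset_of_mem_open hu hUo
  obtain ⟨b', hb', -, hb'V⟩ := hB.exists_subset_of_mem_open hv hVo
  obtain ⟨F, hF, hFN, hNF⟩ := hmix ⟨(b, b'), hb, hb'⟩
  exact ⟨F, hF, hFN, fun γ hγ => NSet_mono hbU hb'V (hNF hγ)⟩

/-- For `X` second countable and `Γ` a second countable, locally compact, Hausdorff
topological group acting continuously on `X`: if `(X, Γ)` is `k`-transitive for every `k`,
then `(X, Γ)` is thick strong mixing. -/
theorem kTrans_implies_thickStrongMixing {X Γ : Type*} [TopologicalSpace X]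
    [SecondCountableTopology X] [Group Γ] [TopologicalSpace Γ] [IsTopologicalGroup Γ]
    [T2Space Γ] [SecondCountableTopology Γ] [LocallyCompactSpace Γ]
    [MulAction Γ X] [ContinuousSMul Γ X]
    (h : ∀ k : ℕ, IsKTrans Γ X k) :
    ThickStrongMixing Γ X :=
  kTrans_implies_thickStrongMixing_general h
end

section
/- Let Γ be a Hausdorff topological group and let C be a compact proper subset of Γ. Then C does not contain any thick subset of Γ; in particular no thick subset of Γ is contained in a compact proper subset. -/
open Pointwise

/-!
If `N ⊆ C` is thick, the closed translates `γ • C` have the finite intersection property,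
so by compactness of `C` some `x` lies in every `γ • C`. Then `g = (x * g⁻¹)⁻¹ * x ∈ C`
for every `g`, i.e. `C` is everything.
-/

open Set

theorem IsThick.mono {G : Type*} [Group G] {N M : Set G} (hNM : N ⊆ M) (hN : IsThick N) :
    IsThick M := fun F =>
  (hN F).mono <| inter_subset_inter hNM <|
    iInter₂_mono fun _ _ => smul_set_mono hNM

theorem IsThick.exists_mem_forall_smul {G : Type*} [Group G] [TopologicalSpace G]
    [ContinuousConstSMul G G] [T2Space G] {C : Set G} (hC : IsCompact C) (hthick : IsThick C) :
    ∃ x, ∀ γ : G, x ∈ γ • C := by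
  obtain ⟨x, -, hx⟩ :=
    hC.inter_iInter_nonempty (fun γ : G => γ • C) (fun γ => (hC.smul γ).isClosed) hthick
  exact ⟨x, mem_iInter.mp hx⟩

theorem eq_univ_of_forall_mem_smul {G : Type*} [Group G] {C : Set G} {x : G}
    (hx : ∀ γ : G, x ∈ γ • C) : C = univ :=
  eq_univ_of_forall fun g => by
    simpa [mem_smul_set_iff_inv_smul_mem] using hx (x * g⁻¹)

/-- In a Hausdorff topological group `Γ`, a compact proper subset `C` contains no thick
subset of `Γ`. -/
theorem compact_proper_not_contains_thick {Γ : Type*} [Group Γ] [TopologicalSpace Γ]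
    [IsTopologicalGroup Γ] [T2Space Γ] (C : Set Γ) (hC : IsCompact C)
    (hCproper : C ≠ Set.univ) :
    ∀ N : Set Γ, N ⊆ C → ¬ IsThick N := by
  intro N hNC hN
  obtain ⟨x, hx⟩ := (hN.mono hNC).exists_mem_forall_smul hC
  exact hCproper (eq_univ_of_forall_mem_smul hx)
end

section
/- Let X be a second countable topological space and let Γ be a second countable, locally compact, Hausdorff topological group that is not compact, acting continuously on X. If (X, Γ) is thick strong mixing, then (X, Γ) is k-transitive for every k ∈ ℕ. -/
open Pointwise

/-! A thick set `N` satisfies `N * N⁻¹ = Γ`, so in a noncompact group it lies in no compact set.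
Given finitely many pairs `(Uᵢ, Vᵢ)`, thick strong mixing yields compact exceptional sets `Fᵢ`;
any `γ ∈ N` outside the compact set `⋃ᵢ Fᵢ` then moves every `Uᵢ` to meet `Vᵢ`. -/

theorem IsThick.mul_inv_eq_univ {G : Type*} [Group G] {N : Set G} (hN : IsThick N) :
    N * N⁻¹ = Set.univ := by
  refine Set.eq_univ_of_forall fun g => ?_
  obtain ⟨n, hn, hgn⟩ := hN {g}
  obtain ⟨m, hm, rfl⟩ : n ∈ g • N := by simpa using hgn
  exact ⟨g • m, hn, m⁻¹, Set.inv_mem_inv.2 hm, by simp⟩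

theorem IsThick.exists_mem_notMem_of_isCompact {G : Type*} [Group G] [TopologicalSpace G]
    [ContinuousMul G] [ContinuousInv G] (hG : ¬ CompactSpace G) {N K : Set G}
    (hN : IsThick N) (hK : IsCompact K) : ∃ γ ∈ N, γ ∉ K := by
  by_contra! hNK
  have hsub : N * N⁻¹ ⊆ K * K⁻¹ := Set.mul_subset_mul hNK (Set.inv_subset_inv.2 hNK)
  rw [hN.mul_inv_eq_univ, Set.univ_subset_iff] at hsub
  exact hG ⟨hsub ▸ hK.mul hK.inv⟩

theorem thickStrongMixing_implies_kTrans_general {X Γ : Type*} [TopologicalSpace X]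
    [Group Γ] [TopologicalSpace Γ] [IsTopologicalGroup Γ]
    (hnc : ¬ CompactSpace Γ) [MulAction Γ X]
    (h : ThickStrongMixing Γ X) :
    ∀ k : ℕ, IsKTrans Γ X k := by
  obtain ⟨N, hthick, hmix⟩ := h
  intro k U V hUo hUne hVo hVne
  choose F hFc _ hF using fun i => hmix (U i) (V i) (hUo i) (hUne i) (hVo i) (hVne i)
  obtain ⟨γ, hγN, hγF⟩ := hthick.exists_mem_notMem_of_isCompact hnc (isCompact_iUnion hFc)
  exact ⟨γ, fun i => hF i γ ⟨hγN, fun hγ => hγF (Set.mem_iUnion_of_mem i hγ)⟩⟩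

/-- For `X` second countable and `Γ` a second countable, locally compact, Hausdorff
topological group that is not compact, acting continuously on `X`: if `(X, Γ)` is thick
strong mixing then it is `k`-transitive for every `k`. -/
theorem thickStrongMixing_implies_kTrans {X Γ : Type*} [TopologicalSpace X]
    [SecondCountableTopology X] [Group Γ] [TopologicalSpace Γ] [IsTopologicalGroup Γ]
    [T2Space Γ] [SecondCountableTopology Γ] [LocallyCompactSpace Γ]
    (hnc : ¬ CompactSpace Γ) [MulAction Γ X] [ContinuousSMul Γ X]
    (h : ThickStrongMixing Γ X) :
    ∀ k : ℕ, IsKTrans Γ X k :=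
  thickStrongMixing_implies_kTrans_general hnc h
end

section
/- The action of SL(2, ℤ) on the torus 𝕋² = ℝ²/ℤ² induced by matrix multiplication on ℝ² is weak mixing but not strong mixing: for all nonempty open sets U₁, U₂, V₁, V₂ ⊆ 𝕋² there exists γ ∈ SL(2, ℤ) with γU₁ ∩ V₁ ≠ ∅ and γU₂ ∩ V₂ ≠ ∅; but there exist nonempty open sets U, V ⊆ 𝕋² such that for every finite set F ⊆ SL(2, ℤ) there is γ ∈ SL(2, ℤ) \ F with γU ∩ V = ∅. -/
open Pointwise

/-- The torus `𝕋² = ℝ²/ℤ²`, realized as the quotient of `Fin 2 → ℝ` by the integer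
lattice (the subgroup of vectors with all coordinates in `ℤ·1`), with the quotient
topology. -/
abbrev Torus2 : Type :=
  (Fin 2 → ℝ) ⧸ (AddSubgroup.pi (Set.univ : Set (Fin 2)) fun _ => AddSubgroup.zmultiples (1 : ℝ))

/-- The quotient map `ℝ² → 𝕋²`. -/
def torusMk : (Fin 2 → ℝ) → Torus2 := QuotientAddGroup.mk

/-- The linear action of `γ ∈ SL(2, ℤ)` on `ℝ²` by matrix multiplication. -/
def sl2Vec (γ : Matrix.SpecialLinearGroup (Fin 2) ℤ) (v : Fin 2 → ℝ) : Fin 2 → ℝ :=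
  ((γ : Matrix (Fin 2) (Fin 2) ℤ).map (Int.cast : ℤ → ℝ)).mulVec v

/-- `slHits γ U V` says that `γU ∩ V ≠ ∅` for the induced action of `γ ∈ SL(2, ℤ)` on the
torus: since the quotient map is surjective, this holds iff some `v ∈ ℝ²` has `[v] ∈ U`
and `[γv] ∈ V`. -/
def slHits (γ : Matrix.SpecialLinearGroup (Fin 2) ℤ) (U V : Set Torus2) : Prop :=
  ∃ v : Fin 2 → ℝ, torusMk v ∈ U ∧ torusMk (sl2Vec γ v) ∈ V

/-!
Weak mixing: the cat map `[[2, 1], [1, 1]]` stretches the line of irrational slope spanned by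
`(φ, 1)` by the factor `φ ^ 2`. A short segment of that line inside `U` is stretched by the
`n`-th power into a segment so long that, lines of irrational slope being uniformly dense in the
torus, it meets `V`; for `n` large this happens for both pairs `(Uᵢ, Vᵢ)` at once.

Not strong mixing: the shears `Tⁿ = [[1, n], [0, 1]]` fix the second coordinate, so none of them
moves a point of the strip `0 < y < 1/2` into the strip `1/2 < y < 1`.
-/

open Filter Set ModularGroup Real goldenRatio

theorem Irrational.exists_bound_int_mul_sub_int_near {α δ : ℝ} (hα : Irrational α) (hδ : 0 < δ) :
    ∃ K : ℝ, ∀ x : ℝ, ∃ h j : ℤ, |(h : ℝ)| ≤ K ∧ |h * α - j - x| < δ := by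
  obtain ⟨N, hN⟩ := exists_nat_one_div_lt hδ
  obtain ⟨j₀, k, hk, -, hkj⟩ := Real.exists_int_int_abs_mul_sub_le α N.succ_pos
  set β := k * α - j₀
  have hβ : β ≠ 0 := ((hα.intCast_mul hk.ne').sub_intCast j₀).ne_zero
  have hβδ : |β| < δ := hkj.trans_lt (lt_of_le_of_lt (by gcongr; simp) hN)
  have hβpos : 0 < |β| := abs_pos.mpr hβ
  refine ⟨(1 / |β| + 1) * k, fun x => ?_⟩
  -- Walk from `⌊x⌋` to `x` in steps of `β`, a small nonzero element of `ℤα + ℤ`.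
  set m := round (Int.fract x / β)
  have hm : |Int.fract x / β - m| ≤ 1 / 2 := abs_sub_round _
  refine ⟨m * k, m * j₀ - ⌊x⌋, ?_, ?_⟩
  · have hfract : |Int.fract x / β| ≤ 1 / |β| := by
      rw [abs_div, abs_of_nonneg (Int.fract_nonneg x)]
      exact div_le_div_of_nonneg_right (Int.fract_lt_one x).le hβpos.le
    have hm' : |(m : ℝ)| ≤ 1 / |β| + 1 := by
      have := abs_sub_abs_le_abs_sub (m : ℝ) (Int.fract x / β)
      rw [abs_sub_comm] at hm
      linarith
    push_cast
    rw [abs_mul, abs_of_pos (Int.cast_pos.mpr hk)]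
    gcongr
  · have hdiff : (m * k : ℤ) * α - (m * j₀ - ⌊x⌋ : ℤ) - x = -(β * (Int.fract x / β - m)) := by
      rw [Int.fract]; field_simp; push_cast; ring
    rw [hdiff, abs_neg, abs_mul]
    calc |β| * |Int.fract x / β - m| ≤ |β| * (1 / 2) := by gcongr
      _ < δ := by linarith

theorem Irrational.exists_bound_add_smul_near_intCast {α δ : ℝ} (hα : Irrational α) (hδ : 0 < δ) :
    ∃ K : ℝ, ∀ a w : Fin 2 → ℝ, ∃ t : ℝ, |t| ≤ K ∧
      ∃ z : Fin 2 → ℤ, dist (a + t • ![α, 1] + (Int.cast ∘ z)) w < δ := by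
  obtain ⟨K, hK⟩ := hα.exists_bound_int_mul_sub_int_near hδ
  refine ⟨1 + K, fun a w => ?_⟩
  -- Match the second coordinates exactly, then adjust the first one by integer multiples of `α`.
  set r := w 1 - a 1 with hr
  obtain ⟨h, j, hh, hhj⟩ := hK (w 0 - a 0 - Int.fract r * α)
  refine ⟨Int.fract r + h, ?_, ![-j, ⌊r⌋ - h], ?_⟩
  · calc |Int.fract r + h| ≤ |Int.fract r| + |(h : ℝ)| := abs_add_le _ _
      _ ≤ 1 + K := by
        gcongr
        rw [abs_of_nonneg (Int.fract_nonneg r)]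
        exact (Int.fract_lt_one r).le
  · rw [dist_pi_lt_iff hδ, Fin.forall_fin_two]
    simp only [Pi.add_apply, Pi.smul_apply, Function.comp_apply, Real.dist_eq, smul_eq_mul,
      Matrix.cons_val_zero, Matrix.cons_val_one, Matrix.cons_val_fin_one, Int.cast_neg, Int.cast_sub]
    constructor
    · convert hhj using 2; ring
    · have hzero : a 1 + (Int.fract r + h) * 1 + (⌊r⌋ - h) - w 1 = 0 := by
        linear_combination Int.fract_add_floor r + hr
      rwa [hzero, abs_zero]

theorem torusMk_add_intCast (v : Fin 2 → ℝ) (z : Fin 2 → ℤ) :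
    torusMk (v + Int.cast ∘ z) = torusMk v :=
  QuotientAddGroup.eq.mpr fun i _ => ⟨-z i, by simp⟩

theorem exists_ball_subset_preimage_torusMk {U : Set Torus2} (hUo : IsOpen U) (hU : U.Nonempty) :
    ∃ u : Fin 2 → ℝ, ∃ ε > 0, Metric.ball u ε ⊆ torusMk ⁻¹' U := by
  obtain ⟨u, hu⟩ := hU.preimage (f := torusMk) QuotientAddGroup.mk_surjective
  exact ⟨u, Metric.isOpen_iff.mp (hUo.preimage continuous_quot_mk) u hu⟩

section sl2Vec

variable (γ δ : Matrix.SpecialLinearGroup (Fin 2) ℤ)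

theorem sl2Vec_add (v w : Fin 2 → ℝ) : sl2Vec γ (v + w) = sl2Vec γ v + sl2Vec γ w :=
  Matrix.mulVec_add _ _ _

theorem sl2Vec_smul (c : ℝ) (v : Fin 2 → ℝ) : sl2Vec γ (c • v) = c • sl2Vec γ v :=
  Matrix.mulVec_smul _ _ _

theorem sl2Vec_mul (v : Fin 2 → ℝ) : sl2Vec (γ * δ) v = sl2Vec γ (sl2Vec δ v) := by
  rw [sl2Vec, sl2Vec, sl2Vec, Matrix.mulVec_mulVec, Matrix.SpecialLinearGroup.coe_mul]
  exact congrArg (Matrix.mulVec · v) (Matrix.map_mul (f := Int.castRingHom ℝ))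

variable {γ}

theorem sl2Vec_pow_of_eq_smul {e : Fin 2 → ℝ} {μ : ℝ} (he : sl2Vec γ e = μ • e) (n : ℕ) :
    sl2Vec (γ ^ n) e = μ ^ n • e := by
  induction n with
  | zero => simp [sl2Vec]
  | succ n ih => rw [pow_succ, sl2Vec_mul, he, sl2Vec_smul, ih, smul_smul, pow_succ']

end sl2Vec

theorem eventually_slHits_pow_of_expanding {γ : Matrix.SpecialLinearGroup (Fin 2) ℤ} {α μ : ℝ}
    (hα : Irrational α) (hμ : 1 < μ) (hγ : sl2Vec γ ![α, 1] = μ • ![α, 1])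
    {U V : Set Torus2} (hUo : IsOpen U) (hU : U.Nonempty) (hVo : IsOpen V) (hV : V.Nonempty) :
    ∀ᶠ n in atTop, slHits (γ ^ n) U V := by
  obtain ⟨u, εU, hεU, hu⟩ := exists_ball_subset_preimage_torusMk hUo hU
  obtain ⟨w, εV, hεV, hw⟩ := exists_ball_subset_preimage_torusMk hVo hV
  obtain ⟨K, hK⟩ := hα.exists_bound_add_smul_near_intCast hεV
  filter_upwards [(tendsto_pow_atTop_atTop_of_one_lt hμ).eventually_gt_atTop
    (K * ‖![α, 1]‖ / εU)] with n hn
  have hμn : 0 < μ ^ n := pow_pos (zero_lt_one.trans hμ) n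
  obtain ⟨t, ht, z, hz⟩ := hK (sl2Vec (γ ^ n) u) w
  refine ⟨u + (t / μ ^ n) • ![α, 1], hu ?_, ?_⟩
  · rw [Metric.mem_ball, dist_self_add_left, norm_smul, Real.norm_eq_abs, abs_div,
      abs_of_pos hμn, div_mul_eq_mul_div, div_lt_iff₀ hμn]
    calc |t| * ‖![α, 1]‖ ≤ K * ‖![α, 1]‖ := by gcongr
      _ < εU * μ ^ n := by rw [div_lt_iff₀ hεU] at hn; linarith
  · rw [sl2Vec_add, sl2Vec_smul, sl2Vec_pow_of_eq_smul hγ, smul_smul, div_mul_cancel₀ _ hμn.ne',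
      ← torusMk_add_intCast _ z]
    exact hw hz

def catMap : Matrix.SpecialLinearGroup (Fin 2) ℤ :=
  ⟨!![2, 1; 1, 1], by norm_num [Matrix.det_fin_two_of]⟩

theorem sl2Vec_catMap_goldenRatio : sl2Vec catMap ![φ, 1] = φ ^ 2 • ![φ, 1] := by
  ext i
  fin_cases i <;>
    simp only [sl2Vec, catMap, Matrix.mulVec, dotProduct, Fin.sum_univ_two, Matrix.map_apply,
      Matrix.of_apply, Matrix.cons_val', Matrix.cons_val_fin_one, Matrix.cons_val_zero,
      Matrix.cons_val_one, Int.cast_ofNat, Int.cast_one, Pi.smul_apply, smul_eq_mul, Fin.zero_eta,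
      Fin.mk_one]
  · linear_combination -(φ + 1) * goldenRatio_sq
  · linear_combination -goldenRatio_sq

def horizontalStrip (I : Set ℝ) : Set Torus2 := torusMk '' {v | v 1 ∈ I}

theorem isOpen_horizontalStrip {I : Set ℝ} (hI : IsOpen I) : IsOpen (horizontalStrip I) :=
  QuotientAddGroup.isOpenMap_coe _ (hI.preimage (continuous_apply 1))

theorem horizontalStrip_nonempty {I : Set ℝ} (hI : I.Nonempty) : (horizontalStrip I).Nonempty :=
  (hI.preimage (f := fun v : Fin 2 → ℝ => v 1) fun x => ⟨fun _ => x, rfl⟩).image torusMk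

theorem fract_mem_of_torusMk_mem_horizontalStrip {I : Set ℝ} (hI : I ⊆ Ico 0 1)
    {v : Fin 2 → ℝ} (hv : torusMk v ∈ horizontalStrip I) : Int.fract (v 1) ∈ I := by
  obtain ⟨w, hw, hwv⟩ := hv
  obtain ⟨z, hz⟩ := QuotientAddGroup.eq.mp hwv 1 (mem_univ 1)
  have hv1 : v 1 = w 1 + z := by
    simp only [zsmul_eq_mul, mul_one, Pi.add_apply, Pi.neg_apply] at hz; linarith
  rwa [hv1, Int.fract_add_intCast, Int.fract_eq_self.mpr (hI hw)]

theorem sl2Vec_T_zpow_apply_one (n : ℤ) (v : Fin 2 → ℝ) : sl2Vec (T ^ n) v 1 = v 1 := by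
  simp [sl2Vec, coe_T_zpow, Matrix.mulVec, dotProduct, Fin.sum_univ_two]

theorem not_slHits_T_zpow_horizontalStrip {I J : Set ℝ} (hI : I ⊆ Ico 0 1) (hJ : J ⊆ Ico 0 1)
    (hIJ : Disjoint I J) (n : ℤ) : ¬ slHits (T ^ n) (horizontalStrip I) (horizontalStrip J) := by
  rintro ⟨v, hvI, hvJ⟩
  have hvJ' := fract_mem_of_torusMk_mem_horizontalStrip hJ hvJ
  rw [sl2Vec_T_zpow_apply_one] at hvJ'
  exact hIJ.ne_of_mem (fract_mem_of_torusMk_mem_horizontalStrip hI hvI) hvJ' rfl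

theorem infinite_range_T_zpow :
    (range (T ^ · : ℤ → Matrix.SpecialLinearGroup (Fin 2) ℤ)).Infinite :=
  infinite_range_of_injective fun m n h => by
    simpa [coe_T_zpow] using congrArg (fun γ : Matrix.SpecialLinearGroup (Fin 2) ℤ => γ 0 1) h

/-- The action of `SL(2, ℤ)` on the torus `𝕋² = ℝ²/ℤ²` is weak mixing but not strong
mixing. -/
theorem sl2_torus_weakMixing_not_strongMixing :
    (∀ U₁ U₂ V₁ V₂ : Set Torus2,
      IsOpen U₁ → U₁.Nonempty → IsOpen U₂ → U₂.Nonempty →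
      IsOpen V₁ → V₁.Nonempty → IsOpen V₂ → V₂.Nonempty →
      ∃ γ : Matrix.SpecialLinearGroup (Fin 2) ℤ, slHits γ U₁ V₁ ∧ slHits γ U₂ V₂) ∧
    (∃ U V : Set Torus2, IsOpen U ∧ U.Nonempty ∧ IsOpen V ∧ V.Nonempty ∧
      ∀ F : Finset (Matrix.SpecialLinearGroup (Fin 2) ℤ),
        ∃ γ : Matrix.SpecialLinearGroup (Fin 2) ℤ, γ ∉ F ∧ ¬ slHits γ U V) := by
  have hφ2 : 1 < φ ^ 2 := one_lt_pow₀ one_lt_goldenRatio two_ne_zero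
  have hmix {U V : Set Torus2} (hUo : IsOpen U) (hU : U.Nonempty) (hVo : IsOpen V)
      (hV : V.Nonempty) : ∀ᶠ n in atTop, slHits (catMap ^ n) U V :=
    eventually_slHits_pow_of_expanding goldenRatio_irrational hφ2 sl2Vec_catMap_goldenRatio
      hUo hU hVo hV
  constructor
  · intro U₁ U₂ V₁ V₂ hU₁o hU₁ hU₂o hU₂ hV₁o hV₁ hV₂o hV₂
    obtain ⟨n, h₁, h₂⟩ := ((hmix hU₁o hU₁ hV₁o hV₁).and (hmix hU₂o hU₂ hV₂o hV₂)).exists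
    exact ⟨catMap ^ n, h₁, h₂⟩
  · have hI : Ioo (0 : ℝ) (1 / 2) ⊆ Ico 0 1 :=
      Ioo_subset_Ico_self.trans (Ico_subset_Ico le_rfl (by norm_num))
    have hJ : Ioo (1 / 2 : ℝ) 1 ⊆ Ico 0 1 :=
      Ioo_subset_Ico_self.trans (Ico_subset_Ico (by norm_num) le_rfl)
    refine ⟨horizontalStrip (Ioo 0 (1 / 2)), horizontalStrip (Ioo (1 / 2) 1),
      isOpen_horizontalStrip isOpen_Ioo, horizontalStrip_nonempty (nonempty_Ioo.mpr (by norm_num)),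
      isOpen_horizontalStrip isOpen_Ioo, horizontalStrip_nonempty (nonempty_Ioo.mpr (by norm_num)),
      fun F => ?_⟩
    obtain ⟨-, ⟨n, rfl⟩, hn⟩ := infinite_range_T_zpow.exists_notMem_finset F
    exact ⟨T ^ n, hn, not_slHits_T_zpow_horizontalStrip hI hJ
      (Ico_disjoint_Ico_same.mono Ioo_subset_Ico_self Ioo_subset_Ico_self) n⟩
end

section
/- The action of GL(2, ℂ) on the Riemann sphere ℂP¹ by Möbius transformations is weak mixing but not thick strong mixing: for all nonempty open sets U₁, U₂, V₁, V₂ ⊆ ℂP¹ there exists γ ∈ GL(2, ℂ) with γU₁ ∩ V₁ ≠ ∅ and γU₂ ∩ V₂ ≠ ∅; but there is no thick set N ⊆ GL(2, ℂ) such that for every pair of nonempty open sets U, V ⊆ ℂP¹ there is a compact set F ⊆ N with γU ∩ V ≠ ∅ for all γ ∈ N \ F. -/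
open Pointwise

/-- The Riemann sphere `ℂP¹`, the projectivization of `ℂ²`. -/
abbrev CP1 : Type := Projectivization ℂ (Fin 2 → ℂ)

/-- The quotient topology on `ℂP¹` (quotient of the nonzero vectors of `ℂ²`). -/
noncomputable instance : TopologicalSpace CP1 := instTopologicalSpaceQuotient

/-- `glHits γ U V` says that `γU ∩ V ≠ ∅` for the Möbius action of `γ ∈ GL(2, ℂ)` on
`ℂP¹` given by `γ · [v] = [γv]`: it holds iff there are nonzero `v, w ∈ ℂ²` with
`w = γv`, `[v] ∈ U` and `[w] ∈ V`. -/
def glHits (γ : Matrix.GeneralLinearGroup (Fin 2) ℂ) (U V : Set CP1) : Prop :=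
  ∃ (v w : Fin 2 → ℂ) (hv : v ≠ 0) (hw : w ≠ 0),
    w = (γ : Matrix (Fin 2) (Fin 2) ℂ).mulVec v ∧
    Projectivization.mk ℂ v hv ∈ U ∧ Projectivization.mk ℂ w hw ∈ V

/-!
Weak mixing: `GL(2, ℂ)` acts 2-transitively on `ℂP¹`, and a nonempty open subset of `ℂP¹`
contains two distinct points, because its cone in `ℂ²` is open and so not contained in a line.

For the second claim, put `v ∧ w := v₀ w₁ - v₁ w₀`. The sign of
`|x₀ ∧ x₂| |x₁ ∧ x₃| - |x₀ ∧ x₃| |x₁ ∧ x₂|`, i.e. of `|cross-ratio| - 1`, depends only on the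
points `[xᵢ] ∈ ℂP¹` and is preserved by `GL(2, ℂ)`. In the coordinate `z = v₁ / v₀` it is
negative at `(0, ∞, 1, 2)` and positive at `(0, ∞, 1, 1/2)`, so small neighbourhoods of these
points give four pairs of open sets that no `γ` hits simultaneously. A thick subset of the
noncompact group `GL(2, ℂ)` lies in no compact set, so some `γ ∈ N` avoids the four exceptional
compact sets and would hit all four pairs.
-/

open Projectivization Matrix

theorem IsThick.not_subset_of_isCompact {G : Type*} [Group G] [TopologicalSpace G]
    [IsTopologicalGroup G] [NoncompactSpace G] {N K : Set G} (hN : IsThick N)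
    (hK : IsCompact K) : ¬ N ⊆ K := by
  intro hNK
  obtain ⟨g, hg⟩ := exists_disjoint_smul_of_isCompact hK hK
  obtain ⟨x, hxN, hxgN⟩ := hN {g}
  simp only [Finset.mem_singleton, Set.iInter_iInter_eq_left] at hxgN
  exact hg.ne_of_mem (hNK hxN) (Set.smul_set_mono hNK hxgN) rfl

instance Matrix.GeneralLinearGroup.noncompactSpace {n 𝕜 : Type*} [Fintype n] [DecidableEq n]
    [Nonempty n] [NontriviallyNormedField 𝕜] : NoncompactSpace (GL n 𝕜) := by
  refine ⟨fun h => ?_⟩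
  obtain ⟨i⟩ := ‹Nonempty n›
  have hcont : Continuous fun γ : GL n 𝕜 => (γ : Matrix n n 𝕜) i i :=
    (continuous_apply_apply i i).comp (Units.continuous_val (M := Matrix n n 𝕜))
  obtain ⟨C, hC⟩ := (h.image hcont).isBounded.exists_norm_le
  obtain ⟨r, hr⟩ := NormedField.exists_lt_norm 𝕜 (max C 0)
  have hr0 : r ≠ 0 := norm_pos_iff.1 ((le_max_right _ _).trans_lt hr)
  let γ : GL n 𝕜 := GeneralLinearGroup.mkOfDetNeZero (Matrix.scalar n r) (by simp [hr0])
  have hγ : ‖r‖ ≤ C := by simpa [γ] using hC _ ⟨γ, Set.mem_univ _, rfl⟩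
  exact hr.not_ge (hγ.trans (le_max_left _ _))

def wedge {R : Type*} [CommRing R] (v w : Fin 2 → R) : R := v 0 * w 1 - v 1 * w 0

theorem wedge_mulVec {R : Type*} [CommRing R] (γ : Matrix (Fin 2) (Fin 2) R)
    (v w : Fin 2 → R) : wedge (γ *ᵥ v) (γ *ᵥ w) = γ.det * wedge v w := by
  simp only [wedge, mulVec, dotProduct, Fin.sum_univ_two, det_fin_two]
  ring

theorem wedge_smul_smul {R : Type*} [CommRing R] (a b : R) (v w : Fin 2 → R) :
    wedge (a • v) (b • w) = a * b * wedge v w := by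
  simp only [wedge, Pi.smul_apply, smul_eq_mul]
  ring

def affineCone (U : Set CP1) : Set (Fin 2 → ℂ) := {v | ∃ hv : v ≠ 0, mk ℂ v hv ∈ U}

theorem isOpen_affineCone {U : Set CP1} (hU : IsOpen U) : IsOpen (affineCone U) := by
  have : affineCone U = Subtype.val '' (mk' ℂ ⁻¹' U) := by
    ext v
    simp [affineCone]
  rw [this]
  exact isOpen_ne.isOpenEmbedding_subtypeVal.isOpenMap _ (hU.preimage continuous_quotient_mk')

theorem Set.Nonempty.affineCone {U : Set CP1} (hU : U.Nonempty) : (affineCone U).Nonempty :=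
  let ⟨x, hx⟩ := hU
  ⟨x.rep, x.rep_nonzero, by rwa [mk_rep]⟩

theorem glHits_of_mulVec_eq_smul {γ : GL (Fin 2) ℂ} {U V : Set CP1} {u v : Fin 2 → ℂ} {c : ℂ}
    (hu : u ∈ affineCone U) (hv : v ∈ affineCone V) (hc : c ≠ 0)
    (h : (γ : Matrix (Fin 2) (Fin 2) ℂ) *ᵥ u = c • v) : glHits γ U V := by
  obtain ⟨hu0, huU⟩ := hu
  obtain ⟨hv0, hvV⟩ := hv
  refine ⟨u, c • v, hu0, smul_ne_zero hc hv0, h.symm, huU, ?_⟩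
  rwa [(mk_eq_mk_iff' ℂ _ _ _ hv0).2 ⟨c, rfl⟩]

theorem exists_mem_wedge_ne_zero {C : Set (Fin 2 → ℂ)} (hC : IsOpen C) (hne : C.Nonempty)
    {a : Fin 2 → ℂ} (ha : a ≠ 0) : ∃ u ∈ C, wedge a u ≠ 0 := by
  by_contra! h
  let π : Fin 2 → (Fin 2 → ℂ) →ₗ[ℂ] ℂ := LinearMap.proj
  let S : Submodule ℂ (Fin 2 → ℂ) := LinearMap.ker (a 0 • π 1 - a 1 • π 0)
  have hS : ∀ u, u ∈ S ↔ wedge a u = 0 := fun u => by simp [S, π, wedge, mul_comm]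
  have htop : S = ⊤ :=
    S.eq_top_of_nonempty_interior' (hne.mono (interior_maximal (fun u hu => (hS u).2 (h u hu)) hC))
  have hwedge : ∀ u, wedge a u = 0 := fun u => (hS u).1 (htop ▸ Submodule.mem_top)
  refine ha (funext fun i => ?_)
  fin_cases i
  · simpa [wedge] using hwedge ![0, 1]
  · simpa [wedge] using hwedge ![1, 0]

theorem exists_mulVec_eq_smul {a₁ a₂ b₁ b₂ : Fin 2 → ℂ} (ha : wedge a₁ a₂ ≠ 0)
    (hb : wedge b₁ b₂ ≠ 0) : ∃ γ : GL (Fin 2) ℂ, ∃ c : ℂ, c ≠ 0 ∧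
      (γ : Matrix (Fin 2) (Fin 2) ℂ) *ᵥ a₁ = c • b₁ ∧
      (γ : Matrix (Fin 2) (Fin 2) ℂ) *ᵥ a₂ = c • b₂ := by
  let A : Matrix (Fin 2) (Fin 2) ℂ := !![a₁ 0, a₂ 0; a₁ 1, a₂ 1]
  let B : Matrix (Fin 2) (Fin 2) ℂ := !![b₁ 0, b₂ 0; b₁ 1, b₂ 1]
  -- `adj A * A = det A`, so `B * adj A` sends `aᵢ` to `(a₁ ∧ a₂) • bᵢ`.
  have hdet : (B * A.adjugate).det ≠ 0 := by
    rw [det_mul, det_adjugate]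
    simpa [A, B, det_fin_two_of, wedge, mul_comm] using mul_ne_zero hb ha
  refine ⟨.mkOfDetNeZero _ hdet, wedge a₁ a₂, ha, ?_, ?_⟩ <;>
  · ext i
    fin_cases i <;>
      simp [A, B, adjugate_fin_two_of, mulVec, dotProduct, Fin.sum_univ_two, wedge] <;>
      ring

theorem exists_glHits_glHits {U₁ U₂ V₁ V₂ : Set CP1} (hU₁ : U₁.Nonempty) (hU₂ : IsOpen U₂)
    (hU₂ne : U₂.Nonempty) (hV₁ : V₁.Nonempty) (hV₂ : IsOpen V₂) (hV₂ne : V₂.Nonempty) :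
    ∃ γ : GL (Fin 2) ℂ, glHits γ U₁ V₁ ∧ glHits γ U₂ V₂ := by
  obtain ⟨u₁, hu₁⟩ := hU₁.affineCone
  obtain ⟨v₁, hv₁⟩ := hV₁.affineCone
  obtain ⟨u₂, hu₂, hu⟩ :=
    exists_mem_wedge_ne_zero (isOpen_affineCone hU₂) hU₂ne.affineCone hu₁.1
  obtain ⟨v₂, hv₂, hv⟩ :=
    exists_mem_wedge_ne_zero (isOpen_affineCone hV₂) hV₂ne.affineCone hv₁.1
  obtain ⟨γ, c, hc, h₁, h₂⟩ := exists_mulVec_eq_smul hu hv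
  exact ⟨γ, glHits_of_mulVec_eq_smul hu₁ hv₁ hc h₁, glHits_of_mulVec_eq_smul hu₂ hv₂ hc h₂⟩

def projImage (W : Set (Fin 2 → ℂ)) : Set CP1 := mk' ℂ '' {v | ↑v ∈ W}

theorem mk_mem_projImage {W : Set (Fin 2 → ℂ)} {v : Fin 2 → ℂ} (hv : v ≠ 0) (hvW : v ∈ W) :
    mk ℂ v hv ∈ projImage W :=
  ⟨⟨v, hv⟩, hvW, rfl⟩

theorem mk_mem_projImage_iff {W : Set (Fin 2 → ℂ)} {v : Fin 2 → ℂ} (hv : v ≠ 0) :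
    mk ℂ v hv ∈ projImage W ↔ ∃ a : ℂˣ, a • v ∈ W := by
  constructor
  · rintro ⟨⟨w, hw⟩, hwW, hwv⟩
    obtain ⟨a, rfl⟩ := (mk_eq_mk_iff ℂ w v hw hv).1 hwv
    exact ⟨a, hwW⟩
  · rintro ⟨a, ha⟩
    exact ⟨⟨a • v, smul_ne_zero a.ne_zero hv⟩, ha, (mk_eq_mk_iff ℂ _ v _ hv).2 ⟨a, rfl⟩⟩

theorem isOpen_projImage {W : Set (Fin 2 → ℂ)} (hW : IsOpen W) : IsOpen (projImage W) := by
  have : mk' ℂ ⁻¹' projImage W = ⋃ a : ℂˣ, {v : {v : Fin 2 → ℂ // v ≠ 0} | a • v.1 ∈ W} := by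
    ext ⟨v, hv⟩
    simp [mk_mem_projImage_iff]
  change IsOpen (mk' ℂ ⁻¹' projImage W)
  exact this ▸ isOpen_iUnion fun a =>
    hW.preimage ((continuous_const_smul a).comp continuous_subtype_val)

noncomputable def crossNormDiff (x : Fin 4 → Fin 2 → ℂ) : ℝ :=
  ‖wedge (x 0) (x 2) * wedge (x 1) (x 3)‖ - ‖wedge (x 0) (x 3) * wedge (x 1) (x 2)‖

theorem continuous_crossNormDiff : Continuous crossNormDiff := by
  unfold crossNormDiff wedge
  fun_prop

theorem crossNormDiff_smul (c : Fin 4 → ℂ) (x : Fin 4 → Fin 2 → ℂ) :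
    crossNormDiff (c • x) = ‖∏ i, c i‖ * crossNormDiff x := by
  simp only [crossNormDiff, Pi.smul_apply', wedge_smul_smul, Fin.prod_univ_four, norm_mul]
  ring

theorem crossNormDiff_mulVec (γ : Matrix (Fin 2) (Fin 2) ℂ) (x : Fin 4 → Fin 2 → ℂ) :
    crossNormDiff (fun i => γ *ᵥ x i) = ‖γ.det‖ ^ 2 * crossNormDiff x := by
  simp only [crossNormDiff, wedge_mulVec, norm_mul]
  ring

theorem exists_not_glHits_projImage {W W' : Fin 4 → Set (Fin 2 → ℂ)}
    (hW : Set.univ.pi W ⊆ {x | crossNormDiff x < 0})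
    (hW' : Set.univ.pi W' ⊆ {x | 0 < crossNormDiff x}) (γ : GL (Fin 2) ℂ) :
    ∃ i, ¬ glHits γ (projImage (W i)) (projImage (W' i)) := by
  by_contra! h
  choose v w hv hw hvw hvW hwW' using h
  simp only [mk_mem_projImage_iff] at hvW hwW'
  choose a ha using hvW
  choose b hb using hwW'
  have hneg : crossNormDiff v < 0 := by
    have : crossNormDiff ((fun i => (a i : ℂ)) • v) < 0 := hW fun i _ => ha i
    rw [crossNormDiff_smul] at this
    exact neg_of_mul_neg_right this (norm_nonneg _)
  have hpos : 0 < crossNormDiff w := by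
    have : 0 < crossNormDiff ((fun i => (b i : ℂ)) • w) := hW' fun i _ => hb i
    rw [crossNormDiff_smul] at this
    exact pos_of_mul_pos_right this (norm_nonneg _)
  have hγ : crossNormDiff w = ‖(γ : Matrix (Fin 2) (Fin 2) ℂ).det‖ ^ 2 * crossNormDiff v := by
    rw [← crossNormDiff_mulVec, funext hvw]
  exact hpos.not_ge (hγ ▸ mul_nonpos_of_nonneg_of_nonpos (sq_nonneg _) hneg.le)

theorem exists_open_pairs_not_glHits : ∃ U V : Fin 4 → Set CP1,
    (∀ i, IsOpen (U i) ∧ (U i).Nonempty ∧ IsOpen (V i) ∧ (V i).Nonempty) ∧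
    ∀ γ : GL (Fin 2) ℂ, ∃ i, ¬ glHits γ (U i) (V i) := by
  let p : Fin 4 → Fin 2 → ℂ := ![![1, 0], ![0, 1], ![1, 1], ![1, 2]]
  let q : Fin 4 → Fin 2 → ℂ := ![![1, 0], ![0, 1], ![1, 1], ![2, 1]]
  have hp : crossNormDiff p < 0 := by simp [crossNormDiff, wedge, p]
  have hq : 0 < crossNormDiff q := by simp [crossNormDiff, wedge, q]
  have hp0 : ∀ i, p i ≠ 0 := by intro i; fin_cases i <;> simp [p]
  have hq0 : ∀ i, q i ≠ 0 := by intro i; fin_cases i <;> simp [q]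
  obtain ⟨W, hW, hWp⟩ :=
    isOpen_pi_iff'.1 (isOpen_lt continuous_crossNormDiff continuous_const) p hp
  obtain ⟨W', hW', hWq⟩ :=
    isOpen_pi_iff'.1 (isOpen_lt continuous_const continuous_crossNormDiff) q hq
  refine ⟨fun i => projImage (W i), fun i => projImage (W' i), fun i => ⟨?_, ?_, ?_, ?_⟩,
    exists_not_glHits_projImage hWp hWq⟩
  · exact isOpen_projImage (hW i).1
  · exact ⟨_, mk_mem_projImage (hp0 i) (hW i).2⟩
  · exact isOpen_projImage (hW' i).1
  · exact ⟨_, mk_mem_projImage (hq0 i) (hW' i).2⟩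

/-- The Möbius action of `GL(2, ℂ)` on the Riemann sphere `ℂP¹` is weak mixing but not
thick strong mixing. -/
theorem gl2_cp1_weakMixing_not_thickStrongMixing :
    (∀ U₁ U₂ V₁ V₂ : Set CP1,
      IsOpen U₁ → U₁.Nonempty → IsOpen U₂ → U₂.Nonempty →
      IsOpen V₁ → V₁.Nonempty → IsOpen V₂ → V₂.Nonempty →
      ∃ γ : Matrix.GeneralLinearGroup (Fin 2) ℂ, glHits γ U₁ V₁ ∧ glHits γ U₂ V₂) ∧
    ¬ ∃ N : Set (Matrix.GeneralLinearGroup (Fin 2) ℂ), IsThick N ∧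
        ∀ U V : Set CP1, IsOpen U → U.Nonempty → IsOpen V → V.Nonempty →
          ∃ F : Set (Matrix.GeneralLinearGroup (Fin 2) ℂ), IsCompact F ∧ F ⊆ N ∧
            ∀ γ ∈ N \ F, glHits γ U V := by
  refine ⟨fun _ _ _ _ _ hU₁ hU₂ hU₂ne _ hV₁ hV₂ hV₂ne =>
    exists_glHits_glHits hU₁ hU₂ hU₂ne hV₁ hV₂ hV₂ne, ?_⟩
  rintro ⟨N, hN, hmix⟩
  obtain ⟨U, V, hUV, hnot⟩ := exists_open_pairs_not_glHits
  choose F hF _ hFhits using fun i =>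
    hmix (U i) (V i) (hUV i).1 (hUV i).2.1 (hUV i).2.2.1 (hUV i).2.2.2
  obtain ⟨γ, hγN, hγF⟩ := Set.not_subset.1 (hN.not_subset_of_isCompact (isCompact_iUnion hF))
  obtain ⟨i, hi⟩ := hnot γ
  exact hi (hFhits i γ ⟨hγN, fun h => hγF (Set.mem_iUnion_of_mem i h)⟩)
end
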